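/- arXiv:2201.12846 — 3 statements merged into one kernel-verified Lean document; each statement's English description precedes it below -/
import Mathlib

section
/- Let K be an R-dimensional cell complex that is k-full for some 2 ≤ k ≤ R. Then for every cell x with 1 ≤ rk(x) ≤ k and every vertex v ∈ x, the number of edges at v contained in x equals rk(x), and x is the unique cell of its rank y with { e ∈ E_v | e ⊆ y } = { e ∈ E_v | e ⊆ x }. -/
open scoped Classical

universe u v

/-- Underlying data of a combinatorial cell complex: a finite collection of
finite subsets of a vertex type `V` (the cells) together with a rank function. -/
structure Precc (V : Type u) where
  cells : Finset (Finset V)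
  rk : Finset V → ℕ

namespace Precc

variable {V : Type u} [DecidableEq V] [Fintype V]

/-- The axioms of a combinatorial cell complex (cc): cells are nonempty, every
vertex of a cell is a (rank 0) cell, rank-0 cells are exactly the singletons,
rank is strictly monotone, cells are closed under nonempty intersections, ranks
have no gaps, and the diamond property. -/
def IsCC (K : Precc V) : Prop :=
  (∀ x ∈ K.cells, x.Nonempty) ∧
  (∀ x ∈ K.cells, ∀ a ∈ x, ({a} : Finset V) ∈ K.cells) ∧
  (∀ x ∈ K.cells, (K.rk x = 0 ↔ x.card = 1)) ∧
  (∀ x ∈ K.cells, ∀ y ∈ K.cells, x ⊂ y → K.rk x < K.rk y) ∧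
  (∀ x ∈ K.cells, ∀ y ∈ K.cells, x ∩ y = ∅ ∨ x ∩ y ∈ K.cells) ∧
  (∀ x ∈ K.cells, ∀ y ∈ K.cells, x ⊂ y →
    ∃ z ∈ K.cells, x ⊂ z ∧ z ⊆ y ∧ K.rk z = K.rk x + 1) ∧
  (∀ x ∈ K.cells, ∀ y ∈ K.cells, x ⊆ y → K.rk y = K.rk x + 2 →
    ∃ z₁ ∈ K.cells, ∃ z₂ ∈ K.cells, z₁ ≠ z₂ ∧
      ∀ z ∈ K.cells, ((x ⊆ z ∧ z ⊆ y ∧ K.rk z = K.rk x + 1) ↔ (z = z₁ ∨ z = z₂)))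

/-- The set of cofaces of a cell. -/
noncomputable def cface (K : Precc V) (x : Finset V) : Finset (Finset V) :=
  K.cells.filter fun y => x ⊆ y ∧ K.rk y = K.rk x + 1

/-- The set of faces of a cell. -/
noncomputable def face (K : Precc V) (x : Finset V) : Finset (Finset V) :=
  K.cells.filter fun y => y ⊆ x ∧ K.rk y + 1 = K.rk x

/-- The rank (dimension) of the complex. -/
def Rk (K : Precc V) : ℕ := K.cells.sup K.rk

/-- The set of cells of a given rank. -/
noncomputable def cellsOfRank (K : Precc V) (r : ℕ) : Finset (Finset V) :=
  K.cells.filter fun x => K.rk x = r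

/-- The dual set of a set of vertices: the maximal cells containing it. -/
noncomputable def dualSet (K : Precc V) (A : Finset V) : Finset (Finset V) :=
  (K.cellsOfRank K.Rk).filter fun z => A ⊆ z

/-- A cc is pure if every maximal cell has maximal rank. -/
def Pure (K : Precc V) : Prop :=
  ∀ x ∈ K.cells, (∀ y ∈ K.cells, ¬ x ⊂ y) → K.rk x = K.Rk

/-- A cc is graph-based if every edge (1-cell) has exactly two vertices. -/
def GraphBased (K : Precc V) : Prop :=
  ∀ e ∈ K.cells, K.rk e = 1 → e.card = 2

/-- Non-branching: every sub-maximal cell lies in at most two maximal cells. -/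
def NonBranching (K : Precc V) : Prop :=
  ∀ y ∈ K.cells, K.rk y + 1 = K.Rk → (K.dualSet y).card ≤ 2

def NonSingular (K : Precc V) : Prop :=
  K.GraphBased ∧ K.Pure ∧ K.NonBranching

/-- Closed: non-singular and every sub-maximal cell lies in exactly two
maximal cells. -/
def Closed (K : Precc V) : Prop :=
  K.NonSingular ∧ ∀ y ∈ K.cells, K.rk y + 1 = K.Rk → (K.dualSet y).card = 2

/-- Cells of the boundary: cells contained in a sub-maximal cell lying in
exactly one maximal cell. -/
noncomputable def bdryCells (K : Precc V) : Finset (Finset V) :=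
  K.cells.filter fun x =>
    ∃ y ∈ K.cells, x ⊆ y ∧ K.rk y + 1 = K.Rk ∧ (K.dualSet y).card = 1

/-- The boundary complex. -/
noncomputable def boundary (K : Precc V) : Precc V :=
  ⟨K.bdryCells, K.rk⟩

/-- The dual complex of a (pure) cc, with rank of the dual cell of `x` equal
to `Rk K - rk x` (encoded intrinsically via the intersection of the dual set). -/
noncomputable def dual (K : Precc V) : Precc (Finset V) :=
  ⟨K.cells.image K.dualSet, fun A => K.Rk - K.rk (A.inf id)⟩

/-- The barycentric subdivision: cells are nonempty chains of cells of `K`. -/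
noncomputable def bdiv (K : Precc V) : Precc (Finset V) :=
  ⟨K.cells.powerset.filter fun c => c.Nonempty ∧ ∀ x ∈ c, ∀ y ∈ c, x ⊆ y ∨ y ⊆ x,
   fun c => c.card - 1⟩

/-- Isomorphism of (pre)cell complexes: a rank-preserving bijection between the
cell sets preserving and reflecting inclusions. -/
def IsIso {A : Type u} {B : Type v} (K : Precc A) (L : Precc B) : Prop :=
  ∃ f : Finset A → Finset B,
    Set.BijOn f ↑K.cells ↑L.cells ∧
    (∀ x ∈ K.cells, ∀ y ∈ K.cells, (x ⊆ y ↔ f x ⊆ f y)) ∧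
    (∀ x ∈ K.cells, L.rk (f x) = K.rk x)

/-- Adjacency of two vertices via an edge of `K`. -/
def EdgeRel (K : Precc V) (a b : V) : Prop :=
  ({a, b} : Finset V) ∈ K.cells ∧ K.rk ({a, b} : Finset V) = 1

/-- Connectedness of a cc: graph-based, and the 1-skeleton is connected. -/
def Connected (K : Precc V) : Prop :=
  K.GraphBased ∧ ∀ a b : V, ({a} : Finset V) ∈ K.cells → ({b} : Finset V) ∈ K.cells →
    Relation.ReflTransGen K.EdgeRel a b

/-- Cell-connectedness: the 1-skeleton of every cell is connected. -/
def CellConnected (K : Precc V) : Prop :=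
  K.GraphBased ∧ ∀ x ∈ K.cells, ∀ a ∈ x, ∀ b ∈ x,
    Relation.ReflTransGen (fun s t => s ∈ x ∧ t ∈ x ∧ K.EdgeRel s t) a b

/-- A local cc: connected and cell-connected. -/
def LocalCC (K : Precc V) : Prop := K.Connected ∧ K.CellConnected

/-- The vertex set of a cc. -/
noncomputable def vertices (K : Precc V) : Finset V :=
  Finset.univ.filter fun a => ({a} : Finset V) ∈ K.cells

/-- `J` is a sub-cell complex of `K`. -/
def Subcomplex (J K : Precc V) : Prop :=
  J.cells ⊆ K.cells ∧ ∀ x ∈ J.cells, J.rk x = K.rk x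

/-- The edges of `K` containing a given vertex. -/
noncomputable def EdgesAt (K : Precc V) (a : V) : Finset (Finset V) :=
  K.cells.filter fun e => K.rk e = 1 ∧ a ∈ e

/-- The edges of `K` at a vertex `a` that are contained in a cell `x`. -/
noncomputable def edgesIn (K : Precc V) (a : V) (x : Finset V) : Finset (Finset V) :=
  (K.EdgesAt a).filter fun e => e ⊆ x

/-- `r`-fullness: every set of `j` edges at a vertex (`2 ≤ j ≤ r`) is the set of
edges at that vertex of some `j`-cell. -/
def RFull (K : Precc V) (r : ℕ) : Prop :=
  ∀ a : V, ({a} : Finset V) ∈ K.cells → ∀ j : ℕ, 2 ≤ j → j ≤ r →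
    ∀ S ⊆ K.EdgesAt a, S.card = j →
      ∃ x ∈ K.cells, K.rk x = j ∧ K.edgesIn a x = S

/-- Fullness (= 2-fullness). -/
def Full (K : Precc V) : Prop := K.RFull 2

/-- `n`-regularity: every vertex lies in exactly `n` edges. -/
def Regular (K : Precc V) (n : ℕ) : Prop :=
  ∀ a ∈ K.vertices, (K.EdgesAt a).card = n

/-- `m`-edge-regularity: every edge lies in exactly `m` 2-cells. -/
def EdgeRegular (K : Precc V) (m : ℕ) : Prop :=
  ∀ e ∈ K.cells, K.rk e = 1 → ((K.cellsOfRank 2).filter fun C => e ⊆ C).card = m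

/-- Simplicial complex: every nonempty subset of a cell is a cell. -/
def Simplicial (K : Precc V) : Prop :=
  ∀ x ∈ K.cells, ∀ y : Finset V, y ⊆ x → y.Nonempty → y ∈ K.cells

/-- Adjacency in the dual graph: two distinct maximal cells meeting along an
interior sub-maximal cell. -/
def DualAdj (K : Precc V) (z z' : Finset V) : Prop :=
  z ∈ K.cellsOfRank K.Rk ∧ z' ∈ K.cellsOfRank K.Rk ∧ z ≠ z' ∧
  ∃ y ∈ K.cells, K.rk y + 1 = K.Rk ∧ y ⊆ z ∧ y ⊆ z' ∧ (K.dualSet y).card = 2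

/-- A pinch: a cell whose set of containing maximal cells induces a
disconnected subgraph of the dual graph. -/
def IsPinch (K : Precc V) (x : Finset V) : Prop :=
  ¬ ∀ z ∈ K.dualSet x, ∀ z' ∈ K.dualSet x,
      Relation.ReflTransGen
        (fun a b => a ∈ K.dualSet x ∧ b ∈ K.dualSet x ∧ K.DualAdj a b) z z'

/-- Non-pinching: no `K`-pinch and no `∂K`-pinch. -/
def NonPinching (K : Precc V) : Prop :=
  (∀ x ∈ K.cells, ¬ K.IsPinch x) ∧ (∀ x ∈ K.boundary.cells, ¬ K.boundary.IsPinch x)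

/-- The Euler characteristic. -/
noncomputable def chi (K : Precc V) : ℤ :=
  ∑ r ∈ Finset.range (K.Rk + 1), (-1 : ℤ) ^ r * ((K.cellsOfRank r).card : ℤ)

/-- Restriction of `K` to the cells contained in `A`. -/
noncomputable def restrict (K : Precc V) (A : Finset V) : Precc V :=
  ⟨K.cells.filter fun x => x ⊆ A, K.rk⟩

/-- A shelling of a (non-singular) cc: for rank 0 the trivial order on the one
point, for rank ≥ 1 a linear order of the facets such that the boundary of the
first facet has a shelling and each facet meets the previous ones in a
non-singular complex of rank one less that has a shelling completable into a
shelling of the boundary of the facet, with the boundary conditions of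
Definition 4.9 of the paper (see `IsShelling` below).
The intersection of the `k`-th facet with the union of the previous ones,
as a subcomplex of `K`. -/
noncomputable def interComplex (K : Precc V) (L : List (Finset V)) (k : ℕ)
    (hk : k < L.length) : Precc V :=
  K.restrict (L.get ⟨k, hk⟩ ∩ (L.take k).foldr (· ∪ ·) ∅)

set_option maxHeartbeats 1000000 in
inductive IsShelling : Precc V → List (Finset V) → Prop where
  | point (K : Precc V) (x : Finset V) (hx : K.cells = {x}) (h0 : K.rk x = 0) :
      IsShelling K [x]
  | step (K : Precc V) (L : List (Finset V)) (L₀ : List (Finset V))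
      (S S' : ℕ → List (Finset V))
      (hR : 1 ≤ K.Rk) (hnd : L.Nodup) (hne : L ≠ [])
      (henum : L.toFinset = K.cellsOfRank K.Rk)
      (hfirst : IsShelling ((K.restrict L.headI).boundary) L₀)
      (hS : ∀ (k : ℕ) (hk : k < L.length), 0 < k →
        IsShelling (K.interComplex L k hk) (S k))
      (hS' : ∀ (k : ℕ) (hk : k < L.length), 0 < k →
        IsShelling ((K.restrict (L.get ⟨k, hk⟩)).boundary) (S' k))
      (hpre : ∀ (k : ℕ), k < L.length → 0 < k → S k <+: S' k)
      (hns : ∀ (k : ℕ) (hk : k < L.length), 0 < k →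
        (K.interComplex L k hk).NonSingular ∧
        (K.interComplex L k hk).Rk + 1 = K.Rk ∧
        (k < L.length - 1 → (K.interComplex L k hk).bdryCells.Nonempty) ∧
        ((K.interComplex L k hk).bdryCells = ∅ →
          k = L.length - 1 ∧ K.Closed ∧
          (K.interComplex L k hk).cells = ((K.restrict (L.get ⟨k, hk⟩)).boundary).cells)) :
      IsShelling K L

/-- A shellable cc. -/
def Shellable (K : Precc V) : Prop :=
  K.NonSingular ∧ ∃ L : List (Finset V), IsShelling K L

/-- The connection relation: `∇^a_b e = f`, i.e. `f` is the edge at `b`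
associated to the edge `e` at `a` via the unique 2-cell containing `e` and the
edge `{a,b}` (and `{a,b}` is sent to itself). -/
def ConnRel (K : Precc V) (a b : V) (e f : Finset V) : Prop :=
  (e = ({a, b} : Finset V) ∧ f = ({a, b} : Finset V)) ∨
  (e ≠ ({a, b} : Finset V) ∧ f ≠ ({a, b} : Finset V) ∧
    e ∈ K.cells ∧ f ∈ K.cells ∧ K.rk e = 1 ∧ K.rk f = 1 ∧ a ∈ e ∧ b ∈ f ∧
    ∃ C ∈ K.cells, K.rk C = 2 ∧ e ⊆ C ∧ ({a, b} : Finset V) ⊆ C ∧ f ⊆ C)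

/-- `C` is a connected component of a 2-cell of `K`. -/
def IsComponentOfTwoCell (K : Precc V) (C : Finset V) : Prop :=
  ∃ C₀ ∈ K.cells, K.rk C₀ = 2 ∧ C ⊆ C₀ ∧ C.Nonempty ∧
    (∀ e ∈ K.cells, K.rk e = 1 → e ⊆ C₀ → (e ∩ C).Nonempty → e ⊆ C) ∧
    (∀ a ∈ C, ∀ b ∈ C,
      Relation.ReflTransGen (fun s t => s ∈ C ∧ t ∈ C ∧ K.EdgeRel s t) a b)

/-- `c` is a cyclic enumeration of the vertex set `C` along edges of `K`. -/
def IsCycleOf (K : Precc V) (C : Finset V) (c : List V) : Prop :=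
  c ≠ [] ∧ c.Nodup ∧ c.toFinset = C ∧
  ∀ a : V, c.head? = some a → List.Chain' K.EdgeRel (c ++ [a])

/-- A path in the 1-skeleton, recorded by its list of visited vertices. -/
def IsPathList (K : Precc V) (l : List V) : Prop :=
  l ≠ [] ∧ List.Chain' K.EdgeRel l

/-- Transport of edges along a path via the connection. -/
inductive Transport (K : Precc V) : List V → Finset V → Finset V → Prop where
  | single (a : V) (e : Finset V) : Transport K [a] e e
  | cons {a b : V} {l : List V} {e f g : Finset V} :
      ConnRel K a b e f → Transport K (b :: l) f g → Transport K (a :: b :: l) e g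

/-- `p` and `p'` are the two complementary arcs of the boundary cycle of the
2-cell component `C`, with the same endpoints. -/
def ComplementaryArcs (K : Precc V) (C : Finset V) (p p' : List V) : Prop :=
  p ≠ [] ∧ p' ≠ [] ∧ p.head? = p'.head? ∧ p.getLast? = p'.getLast? ∧ p.Nodup ∧
  ∃ c : List V, IsCycleOf K C c ∧ ∃ a : V, c.head? = some a ∧
    (p ++ p'.reverse.tail = c ++ [a] ∨ p' ++ p.reverse.tail = c ++ [a])

/-- Elementary moves of paths: an edge move (deleting a back-and-forth along an
edge) and a 2-cell move (replacing an arc of a 2-cell component by the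
complementary arc). -/
inductive Move (K : Precc V) : List V → List V → Prop where
  | edgeDel (a b : List V) (u w : V) (h : K.EdgeRel u w) :
      Move K (a ++ u :: w :: u :: b) (a ++ u :: b)
  | cellMove (a b p p' : List V) (C : Finset V)
      (hC : K.IsComponentOfTwoCell C) (harc : K.ComplementaryArcs C p p') :
      Move K (a ++ p ++ b) (a ++ p' ++ b)

/-- Homotopy of paths: generated by finitely many moves (and their inverses). -/
def Homotopic (K : Precc V) (p q : List V) : Prop :=
  Relation.ReflTransGen (fun l l' => Move K l l' ∨ Move K l' l) p q

/-- Monodromy-freedom: the holonomy of the connection around the boundary loop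
of any connected component of a 2-cell is the identity on the incident edges. -/
def MonodromyFree (K : Precc V) : Prop :=
  ∀ C : Finset V, K.IsComponentOfTwoCell C → ∀ c : List V, K.IsCycleOf C c →
    ∀ a : V, c.head? = some a →
      ∀ e f : Finset V, e ∈ K.cells → K.rk e = 1 → e ∩ C = {a} →
        Transport K (c ++ [a]) e f → f = e

/-- Evenness: every connected component of every 2-cell has an even number of
vertices. -/
def EvenCC (K : Precc V) : Prop :=
  ∀ C : Finset V, K.IsComponentOfTwoCell C → Even C.card

/-- The collar of a vertex set `A` in `K`: cells meeting `A` properly. -/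
noncomputable def collarCells (K : Precc V) (A : Finset V) : Finset (Finset V) :=
  K.cells.filter fun x => (x ∩ A).Nonempty ∧ ¬ x ⊆ A

/-- The set `E^x_A` of edges of `x` with exactly one vertex in `A`. -/
noncomputable def edgeCollar (K : Precc V) (A : Finset V) (x : Finset V) : Finset (Finset V) :=
  K.cells.filter fun e => K.rk e = 1 ∧ e ⊆ x ∧ (e ∩ A).card = 1

/-- The `∼`-dual of a cell: the union of its dual in `K` and its dual in `∂K`. -/
noncomputable def bdualSet (K : Precc V) (x : Finset V) : Finset (Finset V) :=
  K.dualSet x ∪ (K.boundary.cells.filter fun y => K.rk y + 1 = K.Rk ∧ x ⊆ y)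

/-- `J` is a (possibly empty) union of connected components of `K`. -/
def IsUnionOfComponents (K J : Precc V) : Prop :=
  ∃ W : Finset V, W ⊆ K.vertices ∧
    (∀ a ∈ W, ∀ b : V, Relation.ReflTransGen K.EdgeRel a b → b ∈ W) ∧
    J.cells = K.cells.filter fun x => x ⊆ W

/-- `g` is the greatest lower bound of `S` among the cells of `K`. -/
def IsMeetOf (K : Precc V) (S : Finset (Finset V)) (g : Finset V) : Prop :=
  g ∈ K.cells ∧ (∀ s ∈ S, g ⊆ s) ∧ ∀ b ∈ K.cells, (∀ s ∈ S, b ⊆ s) → b ⊆ g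

/-- `g` is the least upper bound of `S` among the cells of `K`. -/
def IsJoinOf (K : Precc V) (S : Finset (Finset V)) (g : Finset V) : Prop :=
  g ∈ K.cells ∧ (∀ s ∈ S, s ⊆ g) ∧ ∀ b ∈ K.cells, (∀ s ∈ S, s ⊆ b) → g ⊆ b

/-- A reduction `ρ : J → K` (so that `J` is a subdivision of `K`). -/
def IsReduction (J K : Precc V) (ρ : Finset V → Finset V) : Prop :=
  (∀ x ∈ J.cells, ρ x ∈ K.cells) ∧
  (∀ y ∈ K.cells, ∃ x ∈ J.cells, ρ x = y) ∧
  (∀ x ∈ J.cells, ∀ y ∈ J.cells, x ⊆ y → ρ x ⊆ ρ y) ∧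
  (∀ x ∈ J.cells, ∀ y ∈ J.cells, K.rk (ρ x) = 0 → ρ x = ρ y → x = y) ∧
  (∀ x ∈ J.cells, ∀ g : Finset V, IsMeetOf J (J.cface x) g →
    ∀ h : Finset V, IsMeetOf K ((J.cface x).image ρ) h → ρ g = h) ∧
  (∀ x ∈ J.cells, ∀ y ∈ K.cells, ρ x ⊆ y →
    ∃ w ∈ J.cells, x ⊆ w ∧ J.rk w = K.rk y ∧ ρ w = y) ∧
  (∀ x ∈ J.cells, J.rk x + 1 = K.rk (ρ x) →
    ((J.cface x).filter fun w => ρ w = ρ x).card = 2) ∧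
  (∀ x ∈ J.cells, J.rk x = K.rk (ρ x) →
    ∀ y ∈ K.cface (ρ x), ((J.cface x).filter fun w => ρ w = y).card = 1)

/-- A collapse `π : J → K` (so that `J` is an expansion of `K`). -/
def IsCollapse (J K : Precc V) (π : Finset V → Finset V) : Prop :=
  (∀ x ∈ J.cells, π x ∈ K.cells) ∧
  (∀ y ∈ K.cells, ∃ x ∈ J.cells, π x = y) ∧
  (∀ x ∈ J.cells, ∀ y ∈ J.cells, x ⊆ y → π x ⊆ π y) ∧
  (∀ x ∈ J.cells, ∀ y ∈ J.cells, (∀ z ∈ K.cells, ¬ π x ⊂ z) → π x = π y → x = y) ∧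
  (∀ x ∈ J.cells, 1 ≤ J.rk x → IsJoinOf K ((J.face x).image π) (π x)) ∧
  (∀ x ∈ J.cells, ∀ y ∈ K.cells, y ⊆ π x →
    ∃ w ∈ J.cells, w ⊆ x ∧ J.rk w = K.rk y ∧ π w = y) ∧
  (∀ x ∈ J.cells, K.rk (π x) + 1 = J.rk x →
    ((J.face x).filter fun w => π w = π x).card = 2) ∧
  (∀ x ∈ J.cells, J.rk x = K.rk (π x) →
    ∀ y ∈ K.face (π x), ((J.face x).filter fun w => π w = y).card = 1)

/-- The domain `E_a^{dual b}` of the connection `∇^a_b`: edges at `a` lying in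
a common 2-cell with the edge `{a,b}`. -/
noncomputable def connDomain (K : Precc V) (a b : V) : Finset (Finset V) :=
  (K.EdgesAt a).filter fun e =>
    ∃ C ∈ K.cells, K.rk C = 2 ∧ e ⊆ C ∧ ({a, b} : Finset V) ⊆ C

end Precc

/-! Induction on the rank `r` of `x`. Once edge counts are known below rank `r`, a cell
through `a` is determined by its edges at `a`: intersect it with another such cell, and use
that intersections of cells are cells and that rank is strictly monotone. Then the diamond
property forces at least `r` edges at `a` in `x`, and `r`-fullness rules out more. -/

namespace Precc

variable {V : Type u} [DecidableEq V] {K : Precc V} {a : V} {e x y : Finset V}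

def EdgesInCardEqRk (K : Precc V) (n : ℕ) : Prop :=
  ∀ w ∈ K.cells, K.rk w ≤ n → ∀ a ∈ w, (K.edgesIn a w).card = K.rk w

lemma mem_edgesIn :
    e ∈ K.edgesIn a x ↔ e ∈ K.cells ∧ K.rk e = 1 ∧ a ∈ e ∧ e ⊆ x := by
  simp only [edgesIn, EdgesAt, Finset.mem_filter, and_assoc]

lemma mem_of_mem_edgesIn (he : e ∈ K.edgesIn a x) : a ∈ x :=
  (mem_edgesIn.1 he).2.2.2 (mem_edgesIn.1 he).2.2.1

lemma edgesIn_mono (hxy : x ⊆ y) : K.edgesIn a x ⊆ K.edgesIn a y :=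
  Finset.monotone_filter_right _ fun _ _ he => he.trans hxy

lemma edgesIn_inter : K.edgesIn a (x ∩ y) = K.edgesIn a x ∩ K.edgesIn a y := by
  ext e
  simp only [Finset.mem_inter, mem_edgesIn, Finset.subset_inter_iff]
  tauto

namespace IsCC

lemma inter_mem_cells (hK : K.IsCC) (hx : x ∈ K.cells) (hy : y ∈ K.cells) (ha : a ∈ x ∩ y) :
    x ∩ y ∈ K.cells :=
  (hK.2.2.2.2.1 x hx y hy).resolve_left (Finset.ne_empty_of_mem ha)

lemma eq_of_subset_of_rk_le (hK : K.IsCC) (hx : x ∈ K.cells) (hy : y ∈ K.cells) (hxy : x ⊆ y)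
    (hr : K.rk y ≤ K.rk x) : x = y := by
  by_contra hne
  exact (hK.2.2.2.1 x hx y hy (hxy.ssubset_of_ne hne)).not_ge hr

lemma edgesIn_eq_empty_of_rk_eq_zero (hK : K.IsCC) (hx : x ∈ K.cells) (h0 : K.rk x = 0) :
    K.edgesIn a x = ∅ := by
  refine Finset.eq_empty_of_forall_notMem fun e he => ?_
  obtain ⟨he, hre, -, hex⟩ := mem_edgesIn.1 he
  rw [hK.eq_of_subset_of_rk_le he hx hex (by omega), h0] at hre
  exact absurd hre zero_ne_one

lemma edgesIn_eq_singleton_of_rk_eq_one (hK : K.IsCC) (hx : x ∈ K.cells) (h1 : K.rk x = 1)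
    (ha : a ∈ x) :
    K.edgesIn a x = {x} := by
  ext e
  rw [mem_edgesIn, Finset.mem_singleton]
  constructor
  · rintro ⟨he, hre, -, hex⟩
    exact hK.eq_of_subset_of_rk_le he hx hex (by omega)
  · rintro rfl
    exact ⟨hx, h1, ha, subset_rfl⟩

lemma exists_cell_mem_subset_rk_eq (hK : K.IsCC) (hx : x ∈ K.cells) (ha : a ∈ x) :
    ∀ s ≤ K.rk x, ∃ z ∈ K.cells, a ∈ z ∧ z ⊆ x ∧ K.rk z = s := by
  intro s hs
  induction s with
  | zero =>
    have ha' : ({a} : Finset V) ∈ K.cells := hK.2.1 x hx a ha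
    exact ⟨{a}, ha', Finset.mem_singleton_self a, Finset.singleton_subset_iff.2 ha,
      (hK.2.2.1 _ ha').2 (Finset.card_singleton a)⟩
  | succ s ih =>
    obtain ⟨z, hz, haz, hzx, rfl⟩ := ih (by omega)
    have hne : z ≠ x := by rintro rfl; omega
    obtain ⟨z', hz', hzz', hz'x, hrk⟩ := hK.2.2.2.2.2.1 z hz x hx (hzx.ssubset_of_ne hne)
    exact ⟨z', hz', hzz'.subset haz, hz'x, hrk⟩

lemma edgesInCardEqRk_zero (hK : K.IsCC) : K.EdgesInCardEqRk 0 := by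
  intro w hw h0 a _
  have h0 : K.rk w = 0 := by omega
  rw [hK.edgesIn_eq_empty_of_rk_eq_zero hw h0, Finset.card_empty, h0]

/-- If `y ⊆ x` failed, `x ∩ y` would be a cell of smaller rank with the same edges at `a`
as `y`. -/
lemma subset_of_edgesIn_subset (hK : K.IsCC) {n : ℕ} (hP : K.EdgesInCardEqRk n)
    (hy : y ∈ K.cells) (hay : a ∈ y) (hyn : K.rk y ≤ n + 1)
    (hcard : K.rk y ≤ (K.edgesIn a y).card) (hx : x ∈ K.cells) (hax : a ∈ x)
    (hyx : K.edgesIn a y ⊆ K.edgesIn a x) : y ⊆ x := by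
  have hw : x ∩ y ∈ K.cells := hK.inter_mem_cells hx hy (Finset.mem_inter.2 ⟨hax, hay⟩)
  have hwy : K.edgesIn a (x ∩ y) = K.edgesIn a y := by
    rw [edgesIn_inter, Finset.inter_eq_right.2 hyx]
  by_contra hsub
  have hlt : K.rk (x ∩ y) < K.rk y := hK.2.2.2.1 _ hw y hy
    (Finset.inter_subset_right.ssubset_of_ne fun h => hsub (h ▸ Finset.inter_subset_left))
  have := hP _ hw (by omega) a (Finset.mem_inter.2 ⟨hax, hay⟩)
  rw [hwy] at this
  omega

lemma eq_of_edgesIn_eq (hK : K.IsCC) {n : ℕ} (hP : K.EdgesInCardEqRk n)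
    (hx : x ∈ K.cells) (hxn : K.rk x ≤ n) (hax : a ∈ x)
    (hy : y ∈ K.cells) (hyn : K.rk y ≤ n) (hay : a ∈ y)
    (hxy : K.edgesIn a x = K.edgesIn a y) : x = y :=
  le_antisymm
    (hK.subset_of_edgesIn_subset hP hx hax (by omega) (hP x hx hxn a hax).ge hy hay hxy.le)
    (hK.subset_of_edgesIn_subset hP hy hay (by omega) (hP y hy hyn a hay).ge hx hax hxy.ge)

/-- The diamond property yields two distinct cells of rank `n` between a cell of rank `n + 1`
and a subcell of rank `n - 1` at `a`; their edge sets at `a` are distinct subsets of size `n`. -/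
lemma le_card_edgesIn (hK : K.IsCC) {n : ℕ} (hn : 1 ≤ n) (hP : K.EdgesInCardEqRk n)
    (hx : x ∈ K.cells) (hxr : K.rk x = n + 1) (ha : a ∈ x) :
    n + 1 ≤ (K.edgesIn a x).card := by
  obtain ⟨z, hz, haz, hzx, hrz⟩ := hK.exists_cell_mem_subset_rk_eq hx ha (n - 1) (by omega)
  obtain ⟨z₁, hz₁, z₂, hz₂, hne, hiff⟩ := hK.2.2.2.2.2.2 z hz x hx hzx (by omega)
  obtain ⟨hzz₁, hz₁x, hrz₁⟩ := (hiff z₁ hz₁).2 (Or.inl rfl)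
  obtain ⟨hzz₂, hz₂x, hrz₂⟩ := (hiff z₂ hz₂).2 (Or.inr rfl)
  have hc₁ := hP z₁ hz₁ (by omega) a (hzz₁ haz)
  have hc₂ := hP z₂ hz₂ (by omega) a (hzz₂ haz)
  by_contra! hlt
  have he₁ := Finset.eq_of_subset_of_card_le (edgesIn_mono (K := K) (a := a) hz₁x) (by omega)
  have he₂ := Finset.eq_of_subset_of_card_le (edgesIn_mono (K := K) (a := a) hz₂x) (by omega)
  exact hne (hK.eq_of_edgesIn_eq hP hz₁ (by omega) (hzz₁ haz) hz₂ (by omega) (hzz₂ haz)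
    (he₁.trans he₂.symm))

/-- Fullness turns `n + 1` of the edges at `a` in `x` into a cell `y` of rank `n + 1`, which
then has to be `x` itself. -/
lemma card_edgesIn_le (hK : K.IsCC) {k n : ℕ} (hfull : K.RFull k) (hn : 1 ≤ n)
    (hnk : n + 1 ≤ k) (hP : K.EdgesInCardEqRk n) (hx : x ∈ K.cells) (hxr : K.rk x = n + 1)
    (ha : a ∈ x) :
    (K.edgesIn a x).card ≤ n + 1 := by
  by_contra! hlt
  obtain ⟨S, hSx, hS⟩ := Finset.exists_subset_card_eq hlt.le
  obtain ⟨y, hy, hry, rfl⟩ := hfull a (hK.2.1 x hx a ha) (n + 1) (by omega) hnk S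
    (hSx.trans (Finset.filter_subset _ _)) hS
  obtain ⟨e, he⟩ := Finset.card_pos.1 (by omega : 0 < (K.edgesIn a y).card)
  have hyx :=
    hK.subset_of_edgesIn_subset hP hy (mem_of_mem_edgesIn he) hry.le (by omega) hx ha hSx
  rw [hK.eq_of_subset_of_rk_le hy hx hyx (by omega)] at hS
  omega

lemma edgesInCardEqRk_of_rFull (hK : K.IsCC) {k : ℕ} (hfull : K.RFull k) :
    ∀ n ≤ k, K.EdgesInCardEqRk n := by
  intro n hnk
  induction n with
  | zero => exact hK.edgesInCardEqRk_zero
  | succ n ih =>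
    intro x hx hxn a ha
    rcases hxn.lt_or_eq with hlt | hxr
    · exact ih (by omega) x hx (by omega) a ha
    rcases Nat.eq_zero_or_pos n with rfl | hn
    · rw [hK.edgesIn_eq_singleton_of_rk_eq_one hx hxr ha, Finset.card_singleton, hxr]
    rw [hxr]
    exact le_antisymm (hK.card_edgesIn_le hfull hn hnk (ih (by omega)) hx hxr ha)
      (hK.le_card_edgesIn hn (ih (by omega)) hx hxr ha)

end IsCC

end Precc

namespace Precc

variable {V : Type u} [DecidableEq V] [Fintype V]

theorem statement_8_general (K : Precc V) (hK : K.IsCC) (k : ℕ) (hfull : K.RFull k) :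
    ∀ x ∈ K.cells, 1 ≤ K.rk x → K.rk x ≤ k → ∀ a ∈ x,
      (K.edgesIn a x).card = K.rk x ∧
      (∀ y ∈ K.cells, K.rk y = K.rk x → K.edgesIn a y = K.edgesIn a x → y = x) := by
  intro x hx hx1 hxk a ha
  have hP := hK.edgesInCardEqRk_of_rFull hfull k le_rfl
  have hcard := hP x hx hxk a ha
  refine ⟨hcard, fun y hy hrk hedges => ?_⟩
  obtain ⟨e, he⟩ := Finset.card_pos.1 (by omega : 0 < (K.edgesIn a x).card)
  have hay : a ∈ y := mem_of_mem_edgesIn (hedges ▸ he)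
  exact hK.eq_of_edgesIn_eq hP hy (by omega) hay hx hxk ha hedges

/-- In a `k`-full cc (`2 ≤ k ≤ R`), for every cell `x` with
`1 ≤ rk x ≤ k` and every vertex `v ∈ x`, the number of edges at `v` contained
in `x` equals `rk x`, and `x` is the unique cell of its rank with this set of
edges at `v`. -/
theorem statement_8 (K : Precc V) (hK : K.IsCC) (k : ℕ) (hk2 : 2 ≤ k)
    (hkR : k ≤ K.Rk) (hfull : K.RFull k) :
    ∀ x ∈ K.cells, 1 ≤ K.rk x → K.rk x ≤ k → ∀ a ∈ x,
      (K.edgesIn a x).card = K.rk x ∧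
      (∀ y ∈ K.cells, K.rk y = K.rk x → K.edgesIn a y = K.edgesIn a x → y = x) :=
  statement_8_general K hK k hfull

end Precc
end

section
/- A connected closed cell complex K is simple (i.e., closed and R-full, where R = rk K ≥ 2) if and only if its dual K̄ is a simplicial complex. -/
open scoped Classical

universe u v

namespace Precc

variable {V : Type u} [DecidableEq V] [Fintype V]

section Aux

set_option linter.unusedSectionVars false
set_option linter.unusedVariables false

variable {K : Precc V}

lemma mem_cellsOfRank_iff {r : ℕ} {z : Finset V} :
    z ∈ K.cellsOfRank r ↔ z ∈ K.cells ∧ K.rk z = r := by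
  simp [cellsOfRank]

lemma mem_dualSet_iff {x z : Finset V} :
    z ∈ K.dualSet x ↔ z ∈ K.cells ∧ K.rk z = K.Rk ∧ x ⊆ z := by
  simp [dualSet, cellsOfRank, and_assoc]

lemma mem_EdgesAt_iff {a : V} {e : Finset V} :
    e ∈ K.EdgesAt a ↔ e ∈ K.cells ∧ K.rk e = 1 ∧ a ∈ e := by
  simp [EdgesAt, and_assoc]

lemma mem_edgesIn_iff {a : V} {x e : Finset V} :
    e ∈ K.edgesIn a x ↔ e ∈ K.cells ∧ K.rk e = 1 ∧ a ∈ e ∧ e ⊆ x := by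
  simp only [edgesIn, EdgesAt, Finset.mem_filter, and_assoc]

lemma edgesIn_subset_EdgesAt {a : V} {x : Finset V} : K.edgesIn a x ⊆ K.EdgesAt a :=
  Finset.filter_subset _ _

lemma rk_lt_of_ssubset (hK : K.IsCC) {x y : Finset V} (hx : x ∈ K.cells) (hy : y ∈ K.cells)
    (h : x ⊂ y) : K.rk x < K.rk y := hK.2.2.2.1 x hx y hy h

lemma eq_of_subset_of_rk_le (hK : K.IsCC) {x y : Finset V} (hx : x ∈ K.cells) (hy : y ∈ K.cells)
    (hss : x ⊆ y) (h : K.rk y ≤ K.rk x) : x = y := by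
  by_contra hne
  exact absurd (rk_lt_of_ssubset hK hx hy (ssubset_of_subset_of_ne hss hne)) (by omega)

lemma rk_le_Rk {x : Finset V} (hx : x ∈ K.cells) : K.rk x ≤ K.Rk := Finset.le_sup hx

lemma inter_mem_cells (hK : K.IsCC) {x y : Finset V} (hx : x ∈ K.cells) (hy : y ∈ K.cells)
    (hne : (x ∩ y).Nonempty) : x ∩ y ∈ K.cells := by
  rcases hK.2.2.2.2.1 x hx y hy with h | h
  · rw [h] at hne; exact absurd hne (by simp)
  · exact h

lemma singleton_mem (hK : K.IsCC) {x : Finset V} (hx : x ∈ K.cells) {a : V} (ha : a ∈ x) :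
    ({a} : Finset V) ∈ K.cells := hK.2.1 x hx a ha

lemma rk_singleton (hK : K.IsCC) {a : V} (h : ({a} : Finset V) ∈ K.cells) : K.rk {a} = 0 :=
  (hK.2.2.1 _ h).2 (Finset.card_singleton a)

lemma exists_top (hK : K.IsCC) (hp : K.Pure) {x : Finset V} (hx : x ∈ K.cells) :
    ∃ z ∈ K.cells, x ⊆ z ∧ K.rk z = K.Rk := by
  obtain ⟨z, hz, hmax⟩ := Finset.exists_max_image (K.cells.filter fun y => x ⊆ y)
    (fun y => y.card) ⟨x, by simp [hx]⟩
  rw [Finset.mem_filter] at hz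
  refine ⟨z, hz.1, hz.2, hp z hz.1 ?_⟩
  intro y hy hss
  have h1 := hmax y (Finset.mem_filter.mpr ⟨hy, hz.2.trans hss.subset⟩)
  exact absurd (Finset.card_lt_card hss) (by omega)

lemma saturate (hK : K.IsCC) : ∀ (d : ℕ) {x y : Finset V}, x ∈ K.cells → y ∈ K.cells → x ⊆ y →
    K.rk x + d ≤ K.rk y → ∃ z ∈ K.cells, x ⊆ z ∧ z ⊆ y ∧ K.rk z = K.rk x + d := by
  intro d
  induction d with
  | zero => intro x y hx _ hss _; exact ⟨x, hx, subset_rfl, hss, rfl⟩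
  | succ d IH =>
    intro x y hx hy hss hle
    obtain ⟨z, hz, hxz, hzy, hrk⟩ := IH hx hy hss (by omega)
    have hzy' : z ⊂ y := by
      refine ssubset_of_subset_of_ne hzy fun h => ?_
      subst h; omega
    obtain ⟨w, hw, hzw, hwy, hrkw⟩ := hK.2.2.2.2.2.1 z hz y hy hzy'
    exact ⟨w, hw, hxz.trans hzw.subset, hwy, by omega⟩

lemma edgesIn_rank_one (hK : K.IsCC) {a : V} {e : Finset V} (he : e ∈ K.cells) (h1 : K.rk e = 1)
    (ha : a ∈ e) : K.edgesIn a e = {e} := by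
  ext f
  simp only [mem_edgesIn_iff, Finset.mem_singleton]
  constructor
  · rintro ⟨hf, h1f, _, hfe⟩
    exact eq_of_subset_of_rk_le hK hf he hfe (by omega)
  · rintro rfl; exact ⟨he, h1, ha, subset_rfl⟩

lemma edgesIn_rank_two (hK : K.IsCC) {a : V} {u : Finset V} (hu : u ∈ K.cells) (h2 : K.rk u = 2)
    (ha : a ∈ u) : ∃ e₁ e₂ : Finset V, e₁ ≠ e₂ ∧ K.edgesIn a u = {e₁, e₂} := by
  have hsa : ({a} : Finset V) ∈ K.cells := singleton_mem hK hu ha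
  have h0 : K.rk {a} = 0 := rk_singleton hK hsa
  obtain ⟨z₁, hz₁, z₂, hz₂, hne, hch⟩ := hK.2.2.2.2.2.2 {a} hsa u hu
    (Finset.singleton_subset_iff.mpr ha) (by omega)
  refine ⟨z₁, z₂, hne, ?_⟩
  ext f
  simp only [mem_edgesIn_iff, Finset.mem_insert, Finset.mem_singleton]
  constructor
  · rintro ⟨hf, h1f, haf, hfu⟩
    exact (hch f hf).1 ⟨Finset.singleton_subset_iff.mpr haf, hfu, by omega⟩
  · rintro (rfl | rfl)
    · have h := (hch f hz₁).2 (Or.inl rfl)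
      exact ⟨hz₁, by omega, Finset.singleton_subset_iff.mp h.1, h.2.1⟩
    · have h := (hch f hz₂).2 (Or.inr rfl)
      exact ⟨hz₂, by omega, Finset.singleton_subset_iff.mp h.1, h.2.1⟩

theorem card_edgesIn (hK : K.IsCC) (hfull : K.RFull K.Rk) :
    ∀ (n : ℕ) (u : Finset V), u ∈ K.cells → K.rk u = n → ∀ a ∈ u,
      (K.edgesIn a u).card = n := by
  intro n
  induction n using Nat.strong_induction_on with
  | _ n IH =>
  intro u hu hrk a ha
  have hsa : ({a} : Finset V) ∈ K.cells := singleton_mem hK hu ha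
  have h0 : K.rk {a} = 0 := rk_singleton hK hsa
  match n, hrk, IH with
  | 0, hrk, IH =>
    have hcard : u.card = 1 := (hK.2.2.1 u hu).1 hrk
    have hua : u = {a} := by
      obtain ⟨b, hb⟩ := Finset.card_eq_one.mp hcard
      subst hb
      rw [Finset.mem_singleton] at ha
      rw [ha]
    subst hua
    rw [Finset.card_eq_zero]
    ext f
    simp only [mem_edgesIn_iff, Finset.notMem_empty, iff_false, not_and]
    intro hf h1f haf hfs
    have : f = {a} := Finset.Subset.antisymm hfs (Finset.singleton_subset_iff.mpr haf)
    subst this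
    omega
  | 1, hrk, IH => rw [edgesIn_rank_one hK hu hrk ha, Finset.card_singleton]
  | 2, hrk, IH =>
    obtain ⟨e₁, e₂, hne, hE⟩ := edgesIn_rank_two hK hu hrk ha
    rw [hE, Finset.card_insert_of_notMem (by simpa using hne), Finset.card_singleton]
  | (m+3), hrk, IH =>
    -- lower bound
    obtain ⟨w, hw, haw, hwu, hrkw⟩ := saturate hK (m+1) hsa hu
      (Finset.singleton_subset_iff.mpr ha) (by omega)
    obtain ⟨z₁, hz₁, z₂, hz₂, hzne, hch⟩ := hK.2.2.2.2.2.2 w hw u hu hwu (by omega)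
    have hz₁p := (hch z₁ hz₁).2 (Or.inl rfl)
    have hz₂p := (hch z₂ hz₂).2 (Or.inr rfl)
    have haz₁ : a ∈ z₁ := hz₁p.1 (haw (Finset.mem_singleton_self a))
    have haz₂ : a ∈ z₂ := hz₂p.1 (haw (Finset.mem_singleton_self a))
    have hrkz₁ : K.rk z₁ = m + 2 := by omega
    have hrkz₂ : K.rk z₂ = m + 2 := by omega
    have hE₁ : (K.edgesIn a z₁).card = m + 2 := IH (m+2) (by omega) z₁ hz₁ hrkz₁ a haz₁
    have hE₂ : (K.edgesIn a z₂).card = m + 2 := IH (m+2) (by omega) z₂ hz₂ hrkz₂ a haz₂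
    have hsub₁ : K.edgesIn a z₁ ⊆ K.edgesIn a u := by
      intro e he
      rw [mem_edgesIn_iff] at he ⊢
      exact ⟨he.1, he.2.1, he.2.2.1, he.2.2.2.trans hz₁p.2.1⟩
    have hsub₂ : K.edgesIn a z₂ ⊆ K.edgesIn a u := by
      intro e he
      rw [mem_edgesIn_iff] at he ⊢
      exact ⟨he.1, he.2.1, he.2.2.1, he.2.2.2.trans hz₂p.2.1⟩
    have hEne : K.edgesIn a z₁ ≠ K.edgesIn a z₂ := by
      intro hEq
      have h12 : z₁ ∩ z₂ ∈ K.cells := inter_mem_cells hK hz₁ hz₂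
        ⟨a, Finset.mem_inter.mpr ⟨haz₁, haz₂⟩⟩
      have hssub : z₁ ∩ z₂ ⊂ z₁ := by
        refine ssubset_of_subset_of_ne Finset.inter_subset_left fun hEq2 => hzne ?_
        have hsub12 : z₁ ⊆ z₂ := by rw [← hEq2]; exact Finset.inter_subset_right
        exact eq_of_subset_of_rk_le hK hz₁ hz₂ hsub12 (by omega)
      have hlt := rk_lt_of_ssubset hK h12 hz₁ hssub
      have hcard12 := IH (K.rk (z₁ ∩ z₂)) (by omega) _ h12 rfl a
        (Finset.mem_inter.mpr ⟨haz₁, haz₂⟩)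
      have hsub12 : K.edgesIn a z₁ ⊆ K.edgesIn a (z₁ ∩ z₂) := by
        intro e he
        have he₂ : e ∈ K.edgesIn a z₂ := hEq ▸ he
        rw [mem_edgesIn_iff] at he he₂ ⊢
        exact ⟨he.1, he.2.1, he.2.2.1, Finset.subset_inter he.2.2.2 he₂.2.2.2⟩
      have := Finset.card_le_card hsub12
      omega
    obtain ⟨e, heE₂, heE₁⟩ : ∃ e ∈ K.edgesIn a z₂, e ∉ K.edgesIn a z₁ := by
      by_contra h
      push_neg at h
      exact hEne (Finset.eq_of_subset_of_card_le h (by omega)).symm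
    have hlow : m + 3 ≤ (K.edgesIn a u).card := by
      have hins : insert e (K.edgesIn a z₁) ⊆ K.edgesIn a u := by
        intro f hf
        rcases Finset.mem_insert.mp hf with rfl | hf
        · exact hsub₂ heE₂
        · exact hsub₁ hf
      have := Finset.card_le_card hins
      rw [Finset.card_insert_of_notMem heE₁] at this
      omega
    -- upper bound
    by_contra hne'
    obtain ⟨S, hSsub, hScard⟩ := Finset.exists_subset_card_eq
      (show m + 3 ≤ (K.edgesIn a u).card by omega)
    have hSE : S ⊆ K.EdgesAt a := hSsub.trans edgesIn_subset_EdgesAt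
    obtain ⟨x, hx, hrkx, hEx⟩ := hfull a hsa (m+3) (by omega)
      (by rw [← hrk]; exact rk_le_Rk hu) S hSE hScard
    have hax : a ∈ x := by
      obtain ⟨e₀, he₀⟩ : S.Nonempty := Finset.card_pos.mp (by omega)
      have h := hEx ▸ he₀
      rw [mem_edgesIn_iff] at h
      exact h.2.2.2 h.2.2.1
    have hxu : x ∩ u ∈ K.cells := inter_mem_cells hK hx hu
      ⟨a, Finset.mem_inter.mpr ⟨hax, ha⟩⟩
    have hSsub' : S ⊆ K.edgesIn a (x ∩ u) := by
      intro e' he'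
      have h1 : e' ∈ K.edgesIn a x := hEx ▸ he'
      have h2 : e' ∈ K.edgesIn a u := hSsub he'
      rw [mem_edgesIn_iff] at h1 h2 ⊢
      exact ⟨h1.1, h1.2.1, h1.2.2.1, Finset.subset_inter h1.2.2.2 h2.2.2.2⟩
    have hxux : x ∩ u = x := by
      by_contra hne''
      have hss : x ∩ u ⊂ x := ssubset_of_subset_of_ne Finset.inter_subset_left hne''
      have hlt := rk_lt_of_ssubset hK hxu hx hss
      have hcIH := IH (K.rk (x ∩ u)) (by omega) _ hxu rfl a
        (Finset.mem_inter.mpr ⟨hax, ha⟩)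
      have := Finset.card_le_card hSsub'
      omega
    have hxsubu : x ⊆ u := by rw [← hxux]; exact Finset.inter_subset_right
    have hxequ : x = u := eq_of_subset_of_rk_le hK hx hu hxsubu (by omega)
    exact hne' (by rw [← hxequ, hEx, hScard])

lemma subset_of_edges_subset (hK : K.IsCC) (hfull : K.RFull K.Rk) {a : V} {x w : Finset V}
    (hx : x ∈ K.cells) (hw : w ∈ K.cells) (ha : a ∈ x) (h1 : 1 ≤ K.rk x)
    (h : ∀ e ∈ K.edgesIn a x, e ⊆ w) : x ⊆ w := by
  have hcard := card_edgesIn hK hfull (K.rk x) x hx rfl a ha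
  obtain ⟨e₀, he₀⟩ : (K.edgesIn a x).Nonempty := Finset.card_pos.mp (by omega)
  have haw : a ∈ w := (h e₀ he₀) ((mem_edgesIn_iff.mp he₀).2.2.1)
  have hxw : x ∩ w ∈ K.cells := inter_mem_cells hK hx hw
    ⟨a, Finset.mem_inter.mpr ⟨ha, haw⟩⟩
  by_contra hnss
  have hss : x ∩ w ⊂ x := ssubset_of_subset_of_ne Finset.inter_subset_left
    (fun hEq => hnss (by rw [← hEq]; exact Finset.inter_subset_right))
  have hlt := rk_lt_of_ssubset hK hxw hx hss
  have hcard2 := card_edgesIn hK hfull (K.rk (x ∩ w)) _ hxw rfl a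
    (Finset.mem_inter.mpr ⟨ha, haw⟩)
  have hsub : K.edgesIn a x ⊆ K.edgesIn a (x ∩ w) := by
    intro e he
    have hew := h e he
    rw [mem_edgesIn_iff] at he ⊢
    exact ⟨he.1, he.2.1, he.2.2.1, Finset.subset_inter he.2.2.2 hew⟩
  have := Finset.card_le_card hsub
  omega

lemma eq_of_edgesIn_eq (hK : K.IsCC) (hfull : K.RFull K.Rk) {a : V} {x y : Finset V}
    (hx : x ∈ K.cells) (hy : y ∈ K.cells) (hax : a ∈ x) (hay : a ∈ y) (h1 : 1 ≤ K.rk x)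
    (h : K.edgesIn a x = K.edgesIn a y) : x = y := by
  have hsub1 : x ⊆ y := subset_of_edges_subset hK hfull hx hy hax h1
    (fun e he => (mem_edgesIn_iff.mp (h ▸ he)).2.2.2)
  have h1y : 1 ≤ K.rk y := by
    have hc1 := card_edgesIn hK hfull (K.rk x) x hx rfl a hax
    have hc2 := card_edgesIn hK hfull (K.rk y) y hy rfl a hay
    rw [h] at hc1
    omega
  have hsub2 : y ⊆ x := subset_of_edges_subset hK hfull hy hx hay h1y
    (fun e he => (mem_edgesIn_iff.mp (h ▸ he)).2.2.2)
  exact Finset.Subset.antisymm hsub1 hsub2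

lemma exFull (hK : K.IsCC) (hfull : K.RFull K.Rk) {a : V}
    (hsa : ({a} : Finset V) ∈ K.cells) {S : Finset (Finset V)}
    (hS : S ⊆ K.EdgesAt a) (h1 : 1 ≤ S.card) (hle : S.card ≤ K.Rk) :
    ∃ x ∈ K.cells, K.rk x = S.card ∧ a ∈ x ∧ K.edgesIn a x = S := by
  rcases eq_or_lt_of_le h1 with h1' | h1'
  · obtain ⟨e, rfl⟩ := Finset.card_eq_one.mp h1'.symm
    have he := hS (Finset.mem_singleton_self e)
    rw [mem_EdgesAt_iff] at he
    exact ⟨e, he.1, by rw [Finset.card_singleton]; exact he.2.1, he.2.2,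
      edgesIn_rank_one hK he.1 he.2.1 he.2.2⟩
  · obtain ⟨x, hx, hrkx, hEx⟩ := hfull a hsa S.card (by omega) hle S hS rfl
    have hax : a ∈ x := by
      obtain ⟨e₀, he₀⟩ : S.Nonempty := Finset.card_pos.mp (by omega)
      have h := hEx ▸ he₀
      rw [mem_edgesIn_iff] at h
      exact h.2.2.2 h.2.2.1
    exact ⟨x, hx, hrkx, hax, hEx⟩

lemma card_EdgesAt (hK : K.IsCC) (hcl : K.Closed) (hfull : K.RFull K.Rk) (hR : 2 ≤ K.Rk)
    {a : V} (hsa : ({a} : Finset V) ∈ K.cells) : (K.EdgesAt a).card = K.Rk + 1 := by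
  have hpure : K.Pure := hcl.1.2.1
  obtain ⟨z, hz, haz, hrkz⟩ := exists_top hK hpure hsa
  have h0 : K.rk {a} = 0 := rk_singleton hK hsa
  obtain ⟨y, hy, hay, hyz, hrky⟩ := saturate hK (K.Rk - 1) hsa hz haz (by omega)
  have hrky' : K.rk y = K.Rk - 1 := by omega
  have hDy := hcl.2 y hy (by omega)
  have hzD : z ∈ K.dualSet y := mem_dualSet_iff.mpr ⟨hz, hrkz, hyz⟩
  obtain ⟨z', hz'D, hzz'⟩ : ∃ z' ∈ K.dualSet y, z' ≠ z := by
    by_contra h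
    push_neg at h
    have hsub : K.dualSet y ⊆ {z} := fun w hw => Finset.mem_singleton.mpr (h w hw)
    have := Finset.card_le_card hsub
    rw [Finset.card_singleton] at this
    omega
  rw [mem_dualSet_iff] at hz'D
  have hayy : a ∈ y := hay (Finset.mem_singleton_self a)
  have haz' : a ∈ z' := hz'D.2.2 hayy
  have hazz : a ∈ z := haz (Finset.mem_singleton_self a)
  have hc1 := card_edgesIn hK hfull (K.rk z) z hz rfl a hazz
  have hc2 := card_edgesIn hK hfull (K.rk z') z' hz'D.1 rfl a haz'
  rw [hrkz] at hc1
  rw [hz'D.2.1] at hc2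
  have hlower : K.Rk + 1 ≤ (K.EdgesAt a).card := by
    have hEne : K.edgesIn a z ≠ K.edgesIn a z' := fun hEq =>
      hzz' (eq_of_edgesIn_eq hK hfull hz'D.1 hz haz' hazz (by omega) (by rw [hEq]))
    obtain ⟨e, heE', heE⟩ : ∃ e ∈ K.edgesIn a z', e ∉ K.edgesIn a z := by
      by_contra h
      push_neg at h
      exact hEne (Finset.eq_of_subset_of_card_le h (by omega)).symm
    have hins : insert e (K.edgesIn a z) ⊆ K.EdgesAt a := by
      intro f hf
      rcases Finset.mem_insert.mp hf with rfl | hf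
      · exact edgesIn_subset_EdgesAt heE'
      · exact edgesIn_subset_EdgesAt hf
    have := Finset.card_le_card hins
    rw [Finset.card_insert_of_notMem heE] at this
    omega
  have hupper : (K.EdgesAt a).card ≤ K.Rk + 1 := by
    obtain ⟨P, hP, hPcard⟩ := Finset.exists_subset_card_eq
      (show K.Rk - 1 ≤ (K.EdgesAt a).card by omega)
    obtain ⟨yP, hyP, hrkyP, hayP, hEyP⟩ := exFull hK hfull hsa hP (by omega) (by omega)
    have hDyP := hcl.2 yP hyP (by omega)
    have hmap : ∀ f, f ∈ K.EdgesAt a \ P → ∃ x, x ∈ K.dualSet yP ∧ K.edgesIn a x = insert f P := by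
      intro f hf
      rw [Finset.mem_sdiff] at hf
      have hins : insert f P ⊆ K.EdgesAt a := by
        intro g hg
        rcases Finset.mem_insert.mp hg with rfl | hg
        · exact hf.1
        · exact hP hg
      have hcard : (insert f P).card = K.Rk := by
        rw [Finset.card_insert_of_notMem hf.2]
        omega
      obtain ⟨x, hx, hrkx, hax, hEx⟩ := exFull hK hfull hsa hins (by omega) (by omega)
      rw [hcard] at hrkx
      refine ⟨x, mem_dualSet_iff.mpr ⟨hx, hrkx, ?_⟩, hEx⟩
      refine subset_of_edges_subset hK hfull hyP hx hayP (by omega) ?_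
      intro e he
      rw [hEyP] at he
      have hmem : e ∈ K.edgesIn a x := by rw [hEx]; exact Finset.mem_insert_of_mem he
      exact (mem_edgesIn_iff.mp hmem).2.2.2
    choose! g hg hgE using hmap
    have hle2 : (K.EdgesAt a \ P).card ≤ 2 := by
      rw [← hDyP]
      refine Finset.card_le_card_of_injOn g (fun f hf => hg f hf) ?_
      intro f₁ hf₁ f₂ hf₂ hEq
      rw [Finset.mem_coe] at hf₁ hf₂
      have h1 := hgE f₁ hf₁
      have h2 := hgE f₂ hf₂
      rw [hEq, h2] at h1
      have : f₁ ∈ insert f₂ P := by rw [h1]; exact Finset.mem_insert_self f₁ P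
      rcases Finset.mem_insert.mp this with h | h
      · exact h
      · exact absurd h (Finset.mem_sdiff.mp hf₁).2
    have := Finset.card_sdiff_of_subset hP
    omega
  omega

lemma forward_simplicial (hK : K.IsCC) (hcl : K.Closed) (hR : 2 ≤ K.Rk)
    (hfull : K.RFull K.Rk) : K.dual.Simplicial := by
  intro A hA T hTA hTne
  have hA' : A ∈ K.cells.image K.dualSet := hA
  obtain ⟨x₀, hx₀, rfl⟩ := Finset.mem_image.mp hA'
  obtain ⟨a, ha⟩ := hK.1 x₀ hx₀
  have hsa := singleton_mem hK hx₀ ha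
  have h0 := rk_singleton hK hsa
  have hTM : T ⊆ K.dualSet {a} := by
    intro w hw
    have h := hTA hw
    rw [mem_dualSet_iff] at h ⊢
    exact ⟨h.1, h.2.1, Finset.singleton_subset_iff.mpr (h.2.2 ha)⟩
  have hEcard := card_EdgesAt hK hcl hfull hR hsa
  have hkey : ∀ w, w ∈ K.dualSet {a} → ∃ e, K.EdgesAt a \ K.edgesIn a w = {e} := by
    intro w hw
    rw [mem_dualSet_iff] at hw
    have hawm : a ∈ w := hw.2.2 (Finset.mem_singleton_self a)
    have h1 := card_edgesIn hK hfull (K.rk w) w hw.1 rfl a hawm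
    rw [hw.2.1] at h1
    rw [← Finset.card_eq_one, Finset.card_sdiff_of_subset edgesIn_subset_EdgesAt, h1, hEcard]
    omega
  choose! eh heh using hkey
  have hehmem : ∀ w, w ∈ K.dualSet {a} → eh w ∈ K.EdgesAt a ∧ eh w ∉ K.edgesIn a w := by
    intro w hw
    have h : eh w ∈ K.EdgesAt a \ K.edgesIn a w := by
      rw [heh w hw]; exact Finset.mem_singleton_self _
    exact Finset.mem_sdiff.mp h
  have hehin : ∀ w, w ∈ K.dualSet {a} → ∀ e ∈ K.EdgesAt a, e ≠ eh w → e ∈ K.edgesIn a w := by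
    intro w hw e he hne
    by_contra h
    have hmem : e ∈ K.EdgesAt a \ K.edgesIn a w := Finset.mem_sdiff.mpr ⟨he, h⟩
    rw [heh w hw] at hmem
    exact hne (Finset.mem_singleton.mp hmem)
  have hEw : ∀ w, w ∈ K.dualSet {a} → K.edgesIn a w = K.EdgesAt a \ {eh w} := by
    intro w hw
    have hwm := mem_dualSet_iff.mp hw
    have hawm : a ∈ w := hwm.2.2 (Finset.mem_singleton_self a)
    have h1 := card_edgesIn hK hfull (K.rk w) w hwm.1 rfl a hawm
    rw [hwm.2.1] at h1
    have hsub : K.edgesIn a w ⊆ K.EdgesAt a \ {eh w} := by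
      intro e he
      refine Finset.mem_sdiff.mpr ⟨edgesIn_subset_EdgesAt he, ?_⟩
      rw [Finset.mem_singleton]
      rintro rfl
      exact (hehmem w hw).2 he
    refine Finset.eq_of_subset_of_card_le hsub ?_
    rw [Finset.card_sdiff_of_subset (Finset.singleton_subset_iff.mpr (hehmem w hw).1),
      Finset.card_singleton, hEcard, h1]
    omega
  have hehinj : ∀ w, w ∈ K.dualSet {a} → ∀ w', w' ∈ K.dualSet {a} → eh w = eh w' → w = w' := by
    intro w hw w' hw' hEq
    have hwm := mem_dualSet_iff.mp hw
    have hwm' := mem_dualSet_iff.mp hw'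
    have hE : K.edgesIn a w = K.edgesIn a w' := by
      rw [hEw w hw, hEw w' hw', hEq]
    exact eq_of_edgesIn_eq hK hfull hwm.1 hwm'.1 (hwm.2.2 (Finset.mem_singleton_self a))
      (hwm'.2.2 (Finset.mem_singleton_self a)) (by omega) hE
  have hMcard : (K.dualSet {a}).card ≤ K.Rk + 1 := by
    rw [← hEcard]
    exact Finset.card_le_card_of_injOn eh (fun w hw => (hehmem w hw).1)
      (fun w hw w' hw' h => hehinj w hw w' hw' h)
  by_cases hTeq : T = K.dualSet {a}
  · subst hTeq
    exact Finset.mem_image_of_mem _ hsa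
  · have hTlt : T.card < (K.dualSet {a}).card :=
      Finset.card_lt_card (ssubset_of_subset_of_ne hTM hTeq)
    have hTpos : 1 ≤ T.card := Finset.card_pos.mpr hTne
    obtain ⟨S, hSdef⟩ : ∃ S, S = (K.EdgesAt a).filter (fun e => ∀ w ∈ T, e ⊆ w) :=
      ⟨_, rfl⟩
    have hSsubE : S ⊆ K.EdgesAt a := by rw [hSdef]; exact Finset.filter_subset _ _
    have hcompl : K.EdgesAt a \ S = T.image eh := by
      ext e
      rw [hSdef]
      simp only [Finset.mem_sdiff, Finset.mem_filter, Finset.mem_image, not_and]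
      constructor
      · rintro ⟨he, hnot⟩
        have h2 := hnot he
        push_neg at h2
        obtain ⟨w, hwT, hnsub⟩ := h2
        refine ⟨w, hwT, ?_⟩
        have hwM := hTM hwT
        have hmem : e ∈ K.EdgesAt a \ K.edgesIn a w := Finset.mem_sdiff.mpr
          ⟨he, fun hm => hnsub (mem_edgesIn_iff.mp hm).2.2.2⟩
        rw [heh w hwM] at hmem
        exact (Finset.mem_singleton.mp hmem).symm
      · rintro ⟨w, hwT, rfl⟩
        have hwM := hTM hwT
        refine ⟨(hehmem w hwM).1, fun _ hall => ?_⟩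
        exact (hehmem w hwM).2 (mem_edgesIn_iff.mpr
          ⟨(mem_EdgesAt_iff.mp (hehmem w hwM).1).1, (mem_EdgesAt_iff.mp (hehmem w hwM).1).2.1,
           (mem_EdgesAt_iff.mp (hehmem w hwM).1).2.2, hall w hwT⟩)
    have himcard : (T.image eh).card = T.card :=
      Finset.card_image_of_injOn (fun w hw w' hw' h => hehinj w (hTM hw) w' (hTM hw') h)
    have hScard : S.card = K.Rk + 1 - T.card := by
      have h1 := Finset.card_sdiff_of_subset hSsubE
      rw [hcompl, himcard, hEcard] at h1
      have := Finset.card_le_card hSsubE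
      rw [hEcard] at this
      omega
    obtain ⟨x, hx, hrkx, hax, hEx⟩ := exFull hK hfull hsa hSsubE (by omega) (by omega)
    have hDx : K.dualSet x = T := by
      ext w
      constructor
      · intro hwD
        have hwDm := mem_dualSet_iff.mp hwD
        have hwM : w ∈ K.dualSet {a} := mem_dualSet_iff.mpr
          ⟨hwDm.1, hwDm.2.1, Finset.singleton_subset_iff.mpr (hwDm.2.2 hax)⟩
        by_contra hwT
        have hehS : eh w ∈ S := by
          rw [hSdef, Finset.mem_filter]
          refine ⟨(hehmem w hwM).1, ?_⟩
          intro w' hw'T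
          have hw'M := hTM hw'T
          have hne : eh w ≠ eh w' := fun h =>
            hwT (by rw [hehinj w hwM w' hw'M h]; exact hw'T)
          exact (mem_edgesIn_iff.mp (hehin w' hw'M (eh w) (hehmem w hwM).1 hne)).2.2.2
        rw [← hEx] at hehS
        have hin : eh w ∈ K.edgesIn a w := by
          rw [mem_edgesIn_iff] at hehS ⊢
          exact ⟨hehS.1, hehS.2.1, hehS.2.2.1, hehS.2.2.2.trans hwDm.2.2⟩
        exact (hehmem w hwM).2 hin
      · intro hwT
        have hwM := hTM hwT
        have hwm := mem_dualSet_iff.mp hwM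
        refine mem_dualSet_iff.mpr ⟨hwm.1, hwm.2.1, ?_⟩
        refine subset_of_edges_subset hK hfull hx hwm.1 hax (by omega) ?_
        intro e he
        rw [hEx, hSdef, Finset.mem_filter] at he
        exact he.2 w hwT
    rw [← hDx]
    exact Finset.mem_image_of_mem _ hx

lemma inf'_mem_cells (hK : K.IsCC) :
    ∀ (T : Finset (Finset V)) (hne : T.Nonempty), (∀ z ∈ T, z ∈ K.cells) →
      (T.inf' hne id).Nonempty → T.inf' hne id ∈ K.cells := by
  intro T hne
  induction hne using Finset.Nonempty.cons_induction with
  | singleton a =>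
    intro hcells _
    simpa using hcells a (Finset.mem_singleton_self a)
  | cons a s h hs IH =>
    intro hcells hne2
    rw [Finset.inf'_cons hs] at hne2 ⊢
    have hsub : a ⊓ s.inf' hs id ⊆ s.inf' hs id := inf_le_right
    have hne3 : (s.inf' hs id).Nonempty := hne2.mono hsub
    have hmem := IH (fun z hz => hcells z (Finset.mem_cons_of_mem hz)) hne3
    have ha := hcells a (by simp)
    have heq : (id a ⊓ s.inf' hs id : Finset V) = a ∩ s.inf' hs id := rfl
    rw [heq] at hne2 ⊢
    exact inter_mem_cells hK ha hmem hne2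

lemma dualSet_inf' (hK : K.IsCC) (hsimp : K.dual.Simplicial) {x : Finset V} (hx : x ∈ K.cells)
    {T : Finset (Finset V)} (hT : T ⊆ K.dualSet x) (hne : T.Nonempty) :
    T.inf' hne id ∈ K.cells ∧ K.dualSet (T.inf' hne id) = T := by
  obtain ⟨w, hw, hwT⟩ : ∃ w ∈ K.cells, K.dualSet w = T := by
    have hAd : K.dualSet x ∈ K.dual.cells := Finset.mem_image_of_mem _ hx
    have h := hsimp (K.dualSet x) hAd T hT hne
    exact Finset.mem_image.mp h
  have hwsub : w ⊆ T.inf' hne id := Finset.le_inf' hne id (fun z hz => by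
    have hzw : z ∈ K.dualSet w := hwT ▸ hz
    exact (mem_dualSet_iff.mp hzw).2.2)
  have hwne : w.Nonempty := hK.1 w hw
  have hgne : (T.inf' hne id).Nonempty := hwne.mono hwsub
  have hgcell : T.inf' hne id ∈ K.cells := inf'_mem_cells hK T hne
    (fun z hz => (mem_dualSet_iff.mp (hT hz)).1) hgne
  refine ⟨hgcell, ?_⟩
  apply Finset.Subset.antisymm
  · intro z hz
    rw [← hwT]
    rw [mem_dualSet_iff] at hz ⊢
    exact ⟨hz.1, hz.2.1, hwsub.trans hz.2.2⟩
  · intro z hz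
    rw [mem_dualSet_iff]
    have h := mem_dualSet_iff.mp (hT hz)
    exact ⟨h.1, h.2.1, Finset.inf'_le id hz⟩

lemma rk_inf'_bound (hK : K.IsCC) (hsimp : K.dual.Simplicial) {x : Finset V} (hx : x ∈ K.cells) :
    ∀ (n : ℕ) (T : Finset (Finset V)) (hne : T.Nonempty), T ⊆ K.dualSet x → T.card = n →
      K.rk (T.inf' hne id) + n ≤ K.Rk + 1 := by
  intro n
  induction n using Nat.strong_induction_on with
  | _ n IH =>
  intro T hne hT hcard
  by_cases hn1 : T.card = 1
  · have hcell := (dualSet_inf' hK hsimp hx hT hne).1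
    have := rk_le_Rk hcell
    omega
  · have hn2 : 2 ≤ T.card := by
      have := Finset.card_pos.mpr hne
      omega
    have hz₀' : ∃ z, z ∈ T := hne
    obtain ⟨z₀, hz₀⟩ := hz₀'
    have hne' : (T.erase z₀).Nonempty := by
      rw [← Finset.card_pos, Finset.card_erase_of_mem hz₀]
      omega
    have hT' : T.erase z₀ ⊆ K.dualSet x := (Finset.erase_subset _ _).trans hT
    have hsub : T.inf' hne id ⊆ (T.erase z₀).inf' hne' id :=
      Finset.le_inf' hne' id (fun z hz => Finset.inf'_le id (Finset.mem_of_mem_erase hz))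
    obtain ⟨hgc, hgD⟩ := dualSet_inf' hK hsimp hx hT hne
    obtain ⟨hgc', hgD'⟩ := dualSet_inf' hK hsimp hx hT' hne'
    have hne_g : T.inf' hne id ≠ (T.erase z₀).inf' hne' id := by
      intro hEq
      have hTeq : T = T.erase z₀ := by rw [← hgD', ← hEq, hgD]
      have hz₀' : z₀ ∈ T.erase z₀ := hTeq ▸ hz₀
      exact (Finset.notMem_erase z₀ T) hz₀'
    have hlt := rk_lt_of_ssubset hK hgc hgc' (ssubset_of_subset_of_ne hsub hne_g)
    have hIH := IH (T.card - 1) (by omega) (T.erase z₀) hne' hT'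
      (by rw [Finset.card_erase_of_mem hz₀])
    omega

lemma dual_card_rk (hK : K.IsCC) (hcl : K.Closed) (hsimp : K.dual.Simplicial) :
    ∀ (k : ℕ) (y : Finset V), y ∈ K.cells → K.Rk - K.rk y = k →
      (K.dualSet y).card + K.rk y = K.Rk + 1 ∧
        ∀ c, (∀ z ∈ K.dualSet y, c ⊆ z) → c ⊆ y := by
  intro k
  induction k using Nat.strong_induction_on with
  | _ k IH =>
  intro y hy hk
  have hyR : K.rk y ≤ K.Rk := rk_le_Rk hy
  match k, hk, IH with
  | 0, hk, IH =>
    have hrky : K.rk y = K.Rk := by omega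
    have hDy : K.dualSet y = {y} := by
      ext z
      rw [mem_dualSet_iff, Finset.mem_singleton]
      constructor
      · rintro ⟨hz, hrkz, hyz⟩
        exact (eq_of_subset_of_rk_le hK hy hz hyz (by omega)).symm
      · rintro rfl
        exact ⟨hy, hrky, subset_rfl⟩
    rw [hDy]
    refine ⟨by rw [Finset.card_singleton]; omega, fun c hc => hc y (Finset.mem_singleton_self y)⟩
  | 1, hk, IH =>
    have hDy := hcl.2 y hy (by omega)
    have hne : (K.dualSet y).Nonempty := Finset.card_pos.mp (by omega)
    obtain ⟨hgc, hgD⟩ := dualSet_inf' hK hsimp hy subset_rfl hne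
    have hysubg : y ⊆ (K.dualSet y).inf' hne id :=
      Finset.le_inf' hne id (fun z hz => (mem_dualSet_iff.mp hz).2.2)
    obtain ⟨z, hz, z', hz', hzz'⟩ := Finset.one_lt_card.mp (by omega : 1 < (K.dualSet y).card)
    have hzm := mem_dualSet_iff.mp hz
    have hz'm := mem_dualSet_iff.mp hz'
    have hglt : K.rk ((K.dualSet y).inf' hne id) < K.Rk := by
      have hgsubz : (K.dualSet y).inf' hne id ⊆ z := Finset.inf'_le id hz
      have hgnez : (K.dualSet y).inf' hne id ≠ z := by
        intro hEq
        have hzsubz' : z ⊆ z' := by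
          rw [← hEq]; exact Finset.inf'_le id hz'
        exact hzz' (eq_of_subset_of_rk_le hK hzm.1 hz'm.1 hzsubz' (by omega))
      have := rk_lt_of_ssubset hK hgc hzm.1 (ssubset_of_subset_of_ne hgsubz hgnez)
      omega
    have hrkg : K.rk ((K.dualSet y).inf' hne id) = K.rk y := by
      have h1 : K.rk y ≤ K.rk ((K.dualSet y).inf' hne id) := by
        rcases eq_or_ne y ((K.dualSet y).inf' hne id) with h | h
        · rw [← h]
        · exact le_of_lt (rk_lt_of_ssubset hK hy hgc (ssubset_of_subset_of_ne hysubg h))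
      omega
    have hyeq : y = (K.dualSet y).inf' hne id :=
      eq_of_subset_of_rk_le hK hy hgc hysubg (by omega)
    refine ⟨by omega, fun c hc => ?_⟩
    rw [hyeq]
    exact Finset.le_inf' hne id hc
  | (m+2), hk, IH =>
    have hrky : K.rk y + (m + 2) = K.Rk := by omega
    obtain ⟨z₀, hz₀c, hyz₀, hrkz₀⟩ := exists_top hK hcl.1.2.1 hy
    obtain ⟨u, hu, hyu, huz₀, hrku⟩ := saturate hK 2 hy hz₀c hyz₀ (by omega)
    obtain ⟨v₁, hv₁, v₂, hv₂, hvne, hch⟩ := hK.2.2.2.2.2.2 y hy u hu hyu (by omega)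
    have hv₁p := (hch v₁ hv₁).2 (Or.inl rfl)
    have hv₂p := (hch v₂ hv₂).2 (Or.inr rfl)
    have hrkv₁ : K.rk v₁ = K.rk y + 1 := hv₁p.2.2
    have hrkv₂ : K.rk v₂ = K.rk y + 1 := hv₂p.2.2
    obtain ⟨hIHc₁, hIHg₁⟩ := IH (m+1) (by omega) v₁ hv₁ (by omega)
    obtain ⟨hIHc₂, hIHg₂⟩ := IH (m+1) (by omega) v₂ hv₂ (by omega)
    have hDne : K.dualSet v₁ ≠ K.dualSet v₂ := by
      intro hEq
      have hsub : v₂ ⊆ v₁ := hIHg₁ v₂ (fun z hz => (mem_dualSet_iff.mp (hEq ▸ hz)).2.2)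
      exact hvne (eq_of_subset_of_rk_le hK hv₂ hv₁ hsub (by omega)).symm
    have hDsub₁ : K.dualSet v₁ ⊆ K.dualSet y := by
      intro z hz
      rw [mem_dualSet_iff] at hz ⊢
      exact ⟨hz.1, hz.2.1, hv₁p.1.trans hz.2.2⟩
    have hDsub₂ : K.dualSet v₂ ⊆ K.dualSet y := by
      intro z hz
      rw [mem_dualSet_iff] at hz ⊢
      exact ⟨hz.1, hz.2.1, hv₂p.1.trans hz.2.2⟩
    have hcard₁ : (K.dualSet v₁).card = m + 2 := by omega
    have hcard₂ : (K.dualSet v₂).card = m + 2 := by omega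
    have hDylow : m + 3 ≤ (K.dualSet y).card := by
      obtain ⟨z, hzD₂, hzD₁⟩ : ∃ z ∈ K.dualSet v₂, z ∉ K.dualSet v₁ := by
        by_contra h
        push_neg at h
        exact hDne (Finset.eq_of_subset_of_card_le h (by omega)).symm
      have hins : insert z (K.dualSet v₁) ⊆ K.dualSet y := by
        intro w hw
        rcases Finset.mem_insert.mp hw with rfl | hw
        · exact hDsub₂ hzD₂
        · exact hDsub₁ hw
      have := Finset.card_le_card hins
      rw [Finset.card_insert_of_notMem hzD₁] at this
      omega
    have hne : (K.dualSet y).Nonempty := Finset.card_pos.mp (by omega)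
    obtain ⟨hgc, hgD⟩ := dualSet_inf' hK hsimp hy subset_rfl hne
    have hysubg : y ⊆ (K.dualSet y).inf' hne id :=
      Finset.le_inf' hne id (fun z hz => (mem_dualSet_iff.mp hz).2.2)
    have hbound := rk_inf'_bound hK hsimp hy (K.dualSet y).card (K.dualSet y) hne
      subset_rfl rfl
    have hrkg_ge : K.rk y ≤ K.rk ((K.dualSet y).inf' hne id) := by
      rcases eq_or_ne y ((K.dualSet y).inf' hne id) with h | h
      · rw [← h]
      · exact le_of_lt (rk_lt_of_ssubset hK hy hgc (ssubset_of_subset_of_ne hysubg h))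
    have hyeq : y = (K.dualSet y).inf' hne id :=
      eq_of_subset_of_rk_le hK hy hgc hysubg (by omega)
    refine ⟨by omega, fun c hc => ?_⟩
    rw [hyeq]
    exact Finset.le_inf' hne id hc

lemma backward_full (hK : K.IsCC) (hcl : K.Closed) (hR : 2 ≤ K.Rk)
    (hsimp : K.dual.Simplicial) : K.RFull K.Rk := by
  intro a hsa j hj2 hjR S hS hScard
  have h0 := rk_singleton hK hsa
  have hstr : ∀ y ∈ K.cells, (K.dualSet y).card + K.rk y = K.Rk + 1 ∧
      ∀ c, (∀ z ∈ K.dualSet y, c ⊆ z) → c ⊆ y :=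
    fun y hy => dual_card_rk hK hcl hsimp (K.Rk - K.rk y) y hy rfl
  have hMcard : (K.dualSet {a}).card = K.Rk + 1 := by
    have := (hstr {a} hsa).1
    omega
  have hDsubM : ∀ e ∈ K.EdgesAt a, K.dualSet e ⊆ K.dualSet {a} := by
    intro e he z hz
    rw [mem_EdgesAt_iff] at he
    rw [mem_dualSet_iff] at hz ⊢
    exact ⟨hz.1, hz.2.1, Finset.singleton_subset_iff.mpr (hz.2.2 he.2.2)⟩
  have hDecard : ∀ e ∈ K.EdgesAt a, (K.dualSet e).card = K.Rk := by
    intro e he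
    rw [mem_EdgesAt_iff] at he
    have := (hstr e he.1).1
    omega
  have hf : ∀ e ∈ K.EdgesAt a, ∃ z, K.dualSet {a} \ K.dualSet e = {z} := by
    intro e he
    rw [← Finset.card_eq_one, Finset.card_sdiff_of_subset (hDsubM e he), hMcard, hDecard e he]
    omega
  choose! f hf using hf
  have hfmem : ∀ e ∈ K.EdgesAt a, f e ∈ K.dualSet {a} ∧ f e ∉ K.dualSet e := by
    intro e he
    have h : f e ∈ K.dualSet {a} \ K.dualSet e := by
      rw [hf e he]; exact Finset.mem_singleton_self _
    exact Finset.mem_sdiff.mp h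
  have hfin : ∀ e ∈ K.EdgesAt a, ∀ z ∈ K.dualSet {a}, z ≠ f e → z ∈ K.dualSet e := by
    intro e he z hz hne
    by_contra h
    have hmem : z ∈ K.dualSet {a} \ K.dualSet e := Finset.mem_sdiff.mpr ⟨hz, h⟩
    rw [hf e he] at hmem
    exact hne (Finset.mem_singleton.mp hmem)
  have hDe : ∀ e ∈ K.EdgesAt a, K.dualSet e = K.dualSet {a} \ {f e} := by
    intro e he
    have hsub : K.dualSet e ⊆ K.dualSet {a} \ {f e} := by
      intro z hz
      refine Finset.mem_sdiff.mpr ⟨hDsubM e he hz, ?_⟩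
      rw [Finset.mem_singleton]
      rintro rfl
      exact (hfmem e he).2 hz
    refine Finset.eq_of_subset_of_card_le hsub ?_
    rw [Finset.card_sdiff_of_subset (Finset.singleton_subset_iff.mpr (hfmem e he).1),
      Finset.card_singleton, hMcard, hDecard e he]
    omega
  have hfinj : ∀ e ∈ K.EdgesAt a, ∀ e' ∈ K.EdgesAt a, f e = f e' → e = e' := by
    intro e he e' he' hEq
    have hDeq : K.dualSet e = K.dualSet e' := by
      rw [hDe e he, hDe e' he', hEq]
    have hem := mem_EdgesAt_iff.mp he
    have hem' := mem_EdgesAt_iff.mp he'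
    have hsub1 : e ⊆ e' := (hstr e' hem'.1).2 e
      (fun z hz => (mem_dualSet_iff.mp (hDeq ▸ hz)).2.2)
    have hsub2 : e' ⊆ e := (hstr e hem.1).2 e'
      (fun z hz => (mem_dualSet_iff.mp (hDeq.symm ▸ hz)).2.2)
    exact Finset.Subset.antisymm hsub1 hsub2
  have himsub : S.image f ⊆ K.dualSet {a} := by
    intro z hz
    obtain ⟨e, he, rfl⟩ := Finset.mem_image.mp hz
    exact (hfmem e (hS he)).1
  have himcard : (S.image f).card = j := by
    rw [Finset.card_image_of_injOn (fun e he e' he' h => hfinj e (hS he) e' (hS he') h),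
      hScard]
  have hTcard : (K.dualSet {a} \ S.image f).card = K.Rk + 1 - j := by
    rw [Finset.card_sdiff_of_subset himsub, hMcard, himcard]
  have hTne : (K.dualSet {a} \ S.image f).Nonempty := Finset.card_pos.mp (by omega)
  obtain ⟨hgc, hgD⟩ := dualSet_inf' hK hsimp hsa
    (Finset.sdiff_subset : K.dualSet {a} \ S.image f ⊆ K.dualSet {a}) hTne
  have hrkg : K.rk ((K.dualSet {a} \ S.image f).inf' hTne id) = j := by
    have := (hstr _ hgc).1
    rw [hgD, hTcard] at this
    omega
  refine ⟨(K.dualSet {a} \ S.image f).inf' hTne id, hgc, hrkg, ?_⟩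
  ext e
  rw [mem_edgesIn_iff]
  constructor
  · rintro ⟨hec, he1, hae, heg⟩
    have heE : e ∈ K.EdgesAt a := mem_EdgesAt_iff.mpr ⟨hec, he1, hae⟩
    have hfeT : f e ∉ K.dualSet {a} \ S.image f := by
      intro hfT
      have hgsub : (K.dualSet {a} \ S.image f).inf' hTne id ⊆ f e := Finset.inf'_le id hfT
      have hfeD : f e ∈ K.dualSet e := by
        have hm := mem_dualSet_iff.mp (hfmem e heE).1
        exact mem_dualSet_iff.mpr ⟨hm.1, hm.2.1, heg.trans hgsub⟩
      exact (hfmem e heE).2 hfeD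
    have hfeim : f e ∈ S.image f := by
      by_contra h
      exact hfeT (Finset.mem_sdiff.mpr ⟨(hfmem e heE).1, h⟩)
    obtain ⟨e', he', hEq⟩ := Finset.mem_image.mp hfeim
    rwa [← hfinj e' (hS he') e heE hEq]
  · intro heS
    have heE : e ∈ K.EdgesAt a := hS heS
    have hem := mem_EdgesAt_iff.mp heE
    refine ⟨hem.1, hem.2.1, hem.2.2, ?_⟩
    refine Finset.le_inf' hTne id ?_
    intro z hz
    have hzm := Finset.mem_sdiff.mp hz
    have hznef : z ≠ f e := by
      intro hEq
      exact hzm.2 (hEq ▸ Finset.mem_image_of_mem f heS)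
    exact (mem_dualSet_iff.mp (hfin e heE z hzm.1 hznef)).2.2

end Aux

/-- A connected closed cc `K` of rank `R ≥ 2` is simple
(i.e. `R`-full) iff its dual is a simplicial complex. -/
theorem statement_10 (K : Precc V) (hK : K.IsCC) (hconn : K.Connected)
    (hcl : K.Closed) (hR : 2 ≤ K.Rk) :
    K.RFull K.Rk ↔ K.dual.Simplicial := by
  constructor
  · intro hfull
    exact forward_simplicial hK hcl hR hfull
  · intro hsimp
    exact backward_full hK hcl hR hsimp

end Precc
end

section
/- A 3-full graph-based cell complex is monodromy-free: for every connected component C of a 2-cell and every vertex v of C, the holonomy map obtained by transporting edges in E_v ∩ E_C around the loop of C via the connection ∇ is the identity on E_v ∩ E_C. -/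
open scoped Classical

universe u v

namespace Precc

variable {V : Type u} [DecidableEq V] [Fintype V]

/-- If a rank-2 cell `y` shares a rank-1 cell `u` with a cell `x`, and `x ∩ y`
contains a point outside `u`, then `y ⊆ x`. -/
lemma inter_absorb (K : Precc V) (hK : K.IsCC)
    {x y u : Finset V} (hx : x ∈ K.cells) (hy : y ∈ K.cells) (hry : K.rk y = 2)
    (hu : u ∈ K.cells) (hru : K.rk u = 1) (hux : u ⊆ x) (huy : u ⊆ y)
    {p : V} (hpx : p ∈ x) (hpy : p ∈ y) (hpu : p ∉ u) : y ⊆ x := by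
  obtain ⟨h1, h2, h3, h4, h5, h6, h7⟩ := hK
  have hpxy : p ∈ x ∩ y := Finset.mem_inter.mpr ⟨hpx, hpy⟩
  have hxy : x ∩ y ∈ K.cells := by
    rcases h5 x hx y hy with h | h
    · rw [h] at hpxy; simp at hpxy
    · exact h
  have hssub : u ⊂ x ∩ y := by
    refine (Finset.ssubset_iff_of_subset (Finset.subset_inter hux huy)).mpr ?_
    exact ⟨p, hpxy, hpu⟩
  have h1' : 1 < K.rk (x ∩ y) := by
    have := h4 u hu _ hxy hssub; omega
  have heq : x ∩ y = y := by
    by_contra hne'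
    have hss : x ∩ y ⊂ y :=
      lt_of_le_of_ne (Finset.inter_subset_right) hne'
    have := h4 _ hxy y hy hss
    omega
  intro v hv
  rw [← heq] at hv
  exact (Finset.mem_inter.mp hv).1

/-- Two rank-2 cells containing two distinct common rank-1 cells coincide. -/
lemma two_cells_eq (K : Precc V) (hK : K.IsCC) (hgb : K.GraphBased)
    {D D' u u' : Finset V}
    (hD : D ∈ K.cells) (hrD : K.rk D = 2) (hD' : D' ∈ K.cells) (hrD' : K.rk D' = 2)
    (hu : u ∈ K.cells) (hru : K.rk u = 1) (hu' : u' ∈ K.cells) (hru' : K.rk u' = 1)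
    (hne : u ≠ u') (h1 : u ⊆ D) (h2 : u' ⊆ D) (h3 : u ⊆ D') (h4 : u' ⊆ D') :
    D = D' := by
  have hcu : u.card = 2 := hgb u hu hru
  have hcu' : u'.card = 2 := hgb u' hu' hru'
  have hns1 : ¬ u' ⊆ u := by
    intro h
    exact hne (Finset.eq_of_subset_of_card_le h (by omega)).symm
  have hns2 : ¬ u ⊆ u' := by
    intro h
    exact hne (Finset.eq_of_subset_of_card_le h (by omega))
  obtain ⟨p, hp1, hp2⟩ := Finset.not_subset.mp hns1
  obtain ⟨q, hq1, hq2⟩ := Finset.not_subset.mp hns2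
  have hsub1 : D' ⊆ D :=
    K.inter_absorb hK hD hD' hrD' hu hru h1 h3 (h2 hp1) (h4 hp1) hp2
  have hsub2 : D ⊆ D' :=
    K.inter_absorb hK hD' hD hrD hu' hru' h4 h2 (h3 hq1) (h1 hq1) hq2
  exact Finset.Subset.antisymm hsub2 hsub1

/-- In a rank-2 cell `w`, given an edge `g` of `w` at `a`, there is another
edge of `w` at `a` distinct from `g`. -/
lemma other_edge (K : Precc V) (hK : K.IsCC) {a : V} {w g : Finset V}
    (haK : ({a} : Finset V) ∈ K.cells) (hra : K.rk {a} = 0)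
    (hw : w ∈ K.cells) (hrw : K.rk w = 2)
    (hg : g ∈ K.cells) (hrg : K.rk g = 1) (hgw : g ⊆ w) (hag : a ∈ g) :
    ∃ h ∈ K.cells, h ≠ g ∧ a ∈ h ∧ h ⊆ w ∧ K.rk h = 1 := by
  obtain ⟨h1, h2, h3, h4, h5, h6, h7⟩ := hK
  have haw : ({a} : Finset V) ⊆ w := Finset.singleton_subset_iff.mpr (hgw hag)
  obtain ⟨p₁, hp₁, p₂, hp₂, hpne, hiff⟩ :=
    h7 {a} haK w hw haw (by omega)
  have hgp : g = p₁ ∨ g = p₂ := by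
    exact (hiff g hg).mp ⟨Finset.singleton_subset_iff.mpr hag, hgw, by omega⟩
  rcases hgp with h | h
  · have hp := (hiff p₂ hp₂).mpr (Or.inr rfl)
    exact ⟨p₂, hp₂, by rw [h]; exact hpne.symm,
      Finset.singleton_subset_iff.mp hp.1, hp.2.1, by have := hp.2.2; omega⟩
  · have hp := (hiff p₁ hp₁).mpr (Or.inl rfl)
    exact ⟨p₁, hp₁, by rw [h]; exact hpne,
      Finset.singleton_subset_iff.mp hp.1, hp.2.1, by have := hp.2.2; omega⟩

/-- The key step: the connection preserves the invariant "edge in `X` meeting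
`C` exactly at the current vertex". -/
lemma conn_step (K : Precc V) (hK : K.IsCC) (hgb : K.GraphBased)
    {C C₀ X : Finset V} (hC₀ : C₀ ∈ K.cells) (hrkC₀ : K.rk C₀ = 2)
    (hCC₀ : C ⊆ C₀)
    (hclose : ∀ u ∈ K.cells, K.rk u = 1 → u ⊆ C₀ → (u ∩ C).Nonempty → u ⊆ C)
    (hXc : X ∈ K.cells) (hC₀X : C₀ ⊆ X)
    {a b : V} (haC : a ∈ C) (hbC : b ∈ C) (hab : K.EdgeRel a b)
    {e f : Finset V} (he : e ∈ K.cells) (hre : K.rk e = 1) (heX : e ⊆ X)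
    (heC : e ∩ C = {a}) (hconn : K.ConnRel a b e f) :
    f ∈ K.cells ∧ K.rk f = 1 ∧ f ⊆ X ∧ f ∩ C = {b} := by
  have hcard : ({a, b} : Finset V).card = 2 := hgb _ hab.1 hab.2
  have hne : a ≠ b := by
    intro h; subst h; simp at hcard
  have hae : a ∈ e := by
    have : a ∈ e ∩ C := by rw [heC]; simp
    exact (Finset.mem_inter.mp this).1
  have hbe : b ∉ e := by
    intro h
    have : b ∈ e ∩ C := Finset.mem_inter.mpr ⟨h, hbC⟩
    rw [heC] at this
    exact hne (Finset.mem_singleton.mp this).symm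
  rcases hconn with ⟨hea, _⟩ | ⟨hne1, hnf1, he', hf', hre', hrf', hae', hbf',
      D, hD, hrD, heD, habD, hfD⟩
  · exfalso
    apply hbe
    rw [hea]; simp
  · -- D ⊆ X
    have hbX : b ∈ X := hC₀X (hCC₀ hbC)
    have hbD : b ∈ D := habD (by simp)
    have hDX : D ⊆ X :=
      K.inter_absorb hK hXc hD hrD he hre heX heD hbX hbD hbe
    have hfX : f ⊆ X := hfD.trans hDX
    refine ⟨hf', hrf', hfX, ?_⟩
    -- f ∩ C = {b}
    apply Finset.Subset.antisymm
    · intro w hw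
      obtain ⟨hwf, hwC⟩ := Finset.mem_inter.mp hw
      by_contra hwb
      have hwb' : w ≠ b := fun h => hwb (Finset.mem_singleton.mpr h)
      have hwa : w ≠ a := by
        intro h; subst h
        have hsub : ({w, b} : Finset V) ⊆ f := by
          intro z hz
          rcases Finset.mem_insert.mp hz with h | h
          · subst h; exact hwf
          · rw [Finset.mem_singleton.mp h]; exact hbf'
        have hcf : f.card = 2 := hgb f hf' hrf'
        exact hnf1 (Finset.eq_of_subset_of_card_le hsub (by omega)).symm
      -- D ⊆ C₀
      have habC₀ : ({a, b} : Finset V) ⊆ C₀ := by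
        intro z hz
        rcases Finset.mem_insert.mp hz with h | h
        · subst h; exact hCC₀ haC
        · rw [Finset.mem_singleton.mp h]; exact hCC₀ hbC
      have hwab : w ∉ ({a, b} : Finset V) := by
        simp only [Finset.mem_insert, Finset.mem_singleton]
        push_neg; exact ⟨hwa, hwb'⟩
      have hDC₀ : D ⊆ C₀ :=
        K.inter_absorb hK hC₀ hD hrD hab.1 hab.2 habC₀ habD
          (hCC₀ hwC) (hfD hwf) hwab
      have heC' : e ⊆ C := hclose e he' hre' (heD.trans hDC₀) ⟨a, by rw [heC]; simp⟩
      have : e ∩ C = e := Finset.inter_eq_left.mpr heC'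
      rw [heC] at this
      have hce : e.card = 2 := hgb e he' hre'
      rw [← this] at hce
      simp at hce
    · intro w hw
      rw [Finset.mem_singleton.mp hw]
      exact Finset.mem_inter.mpr ⟨hbf', hbC⟩

/-- Invariant propagation along a transported path. -/
lemma transport_inv (K : Precc V) (hK : K.IsCC) (hgb : K.GraphBased)
    {C C₀ X : Finset V} (hC₀ : C₀ ∈ K.cells) (hrkC₀ : K.rk C₀ = 2)
    (hCC₀ : C ⊆ C₀)
    (hclose : ∀ u ∈ K.cells, K.rk u = 1 → u ⊆ C₀ → (u ∩ C).Nonempty → u ⊆ C)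
    (hXc : X ∈ K.cells) (hC₀X : C₀ ⊆ X)
    {l : List V} {e f : Finset V} (ht : K.Transport l e f) :
    List.Chain' K.EdgeRel l → (∀ x ∈ l, x ∈ C) →
    ∀ a : V, l.head? = some a →
    e ∈ K.cells → K.rk e = 1 → e ⊆ X → e ∩ C = {a} →
    ∃ b : V, l.getLast? = some b ∧
      f ∈ K.cells ∧ K.rk f = 1 ∧ f ⊆ X ∧ f ∩ C = {b} := by
  induction ht with
  | single a e =>
    intro _ _ a' ha' he hre heX heC
    have : a = a' := by simpa using ha'
    subst this
    exact ⟨a, rfl, he, hre, heX, heC⟩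
  | @cons a b l e f g hcr _ ih =>
    intro hchain hmem a' ha' he hre heX heC
    have haa : a = a' := by simpa using ha'
    subst haa
    have hchain' := List.isChain_cons_cons.mp hchain
    have haC : a ∈ C := hmem a (by simp)
    have hbC : b ∈ C := hmem b (by simp)
    obtain ⟨hf, hrf, hfX, hfC⟩ :=
      K.conn_step hK hgb hC₀ hrkC₀ hCC₀ hclose hXc hC₀X haC hbC hchain'.1
        he hre heX heC hcr
    obtain ⟨b', hb', hrest⟩ :=
      ih hchain'.2 (fun x hx => hmem x (by simp [hx])) b rfl hf hrf hfX hfC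
    exact ⟨b', by rw [List.getLast?_cons_cons]; exact hb', hrest⟩

/-- A 3-full graph-based cc is monodromy-free: the holonomy
of the connection around the boundary loop of any connected component of a
2-cell is the identity on the incident edges. -/
theorem statement_13 (K : Precc V) (hK : K.IsCC) (hgb : K.GraphBased)
    (hfull : K.RFull 3) :
    K.MonodromyFree := by
  intro C hC c hcyc a hhead e f he hre heC ht
  obtain ⟨C₀, hC₀, hrkC₀, hCC₀, hCne, hclose, _⟩ := hC
  obtain ⟨hcne, hnd, hctf, hchain⟩ := hcyc
  -- a is the head of c, hence a vertex of C
  have hac : a ∈ c := by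
    cases c with
    | nil => simp at hhead
    | cons x cs =>
      have : x = a := by simpa using hhead
      subst this; simp
  have haC : a ∈ C := by rw [← hctf]; exact List.mem_toFinset.mpr hac
  have haC₀ : a ∈ C₀ := hCC₀ haC
  obtain ⟨h1, h2, h3, h4, h5, h6, h7⟩ := hK
  have hacell : ({a} : Finset V) ∈ K.cells := h2 C₀ hC₀ a haC₀
  have hra0 : K.rk {a} = 0 := (h3 _ hacell).mpr (Finset.card_singleton a)
  -- the two edges of C₀ at a
  obtain ⟨g₁, hg₁c, g₂, hg₂c, hgne, hgiff⟩ :=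
    h7 {a} hacell C₀ hC₀ (Finset.singleton_subset_iff.mpr haC₀) (by omega)
  have hg₁ := (hgiff g₁ hg₁c).mpr (Or.inl rfl)
  have hg₂ := (hgiff g₂ hg₂c).mpr (Or.inr rfl)
  have hrg₁ : K.rk g₁ = 1 := by have := hg₁.2.2; omega
  have hrg₂ : K.rk g₂ = 1 := by have := hg₂.2.2; omega
  have hag₁ : a ∈ g₁ := Finset.singleton_subset_iff.mp hg₁.1
  have hag₂ : a ∈ g₂ := Finset.singleton_subset_iff.mp hg₂.1
  have hg₁C : g₁ ⊆ C := hclose g₁ hg₁c hrg₁ hg₁.2.1 ⟨a, Finset.mem_inter.mpr ⟨hag₁, haC⟩⟩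
  have hg₂C : g₂ ⊆ C := hclose g₂ hg₂c hrg₂ hg₂.2.1 ⟨a, Finset.mem_inter.mpr ⟨hag₂, haC⟩⟩
  have hcg : ∀ g : Finset V, g ∈ K.cells → K.rk g = 1 → g ⊆ C → ¬ g ∩ C = {a} := by
    intro g hg hrg hgC hgCa
    have : g ∩ C = g := Finset.inter_eq_left.mpr hgC
    rw [hgCa] at this
    have hcg2 : g.card = 2 := hgb g hg hrg
    rw [← this] at hcg2
    simp at hcg2
  have heg₁ : e ≠ g₁ := by
    intro h; subst h; exact hcg e he hre hg₁C heC
  have heg₂ : e ≠ g₂ := by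
    intro h; subst h; exact hcg e he hre hg₂C heC
  -- 3-fullness: a 3-cell X with edges {e, g₁, g₂} at a
  set S : Finset (Finset V) := {e, g₁, g₂} with hS
  have hScard : S.card = 3 := by
    rw [hS, Finset.card_insert_of_notMem (by simp [heg₁, heg₂]),
      Finset.card_insert_of_notMem (by simpa using hgne), Finset.card_singleton]
  have hae : a ∈ e := by
    have : a ∈ e ∩ C := by rw [heC]; simp
    exact (Finset.mem_inter.mp this).1
  have hSsub : S ⊆ K.EdgesAt a := by
    intro s hs
    simp only [hS, Finset.mem_insert, Finset.mem_singleton] at hs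
    simp only [EdgesAt, Finset.mem_filter]
    rcases hs with h | h | h <;> subst h
    · exact ⟨he, hre, hae⟩
    · exact ⟨hg₁c, hrg₁, hag₁⟩
    · exact ⟨hg₂c, hrg₂, hag₂⟩
  obtain ⟨X, hX, hrkX, hedges⟩ :=
    hfull a hacell 3 (by norm_num) le_rfl S hSsub hScard
  have hmemS : ∀ s : Finset V, s ∈ S →
      s ∈ K.cells ∧ K.rk s = 1 ∧ a ∈ s ∧ s ⊆ X := by
    intro s hs
    rw [← hedges] at hs
    simp only [edgesIn, EdgesAt, Finset.mem_filter] at hs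
    exact ⟨hs.1.1, hs.1.2.1, hs.1.2.2, hs.2⟩
  have heX : e ⊆ X := (hmemS e (by simp [hS])).2.2.2
  have hg₁X : g₁ ⊆ X := (hmemS g₁ (by simp [hS])).2.2.2
  -- C₀ ⊆ X : via the diamond property for g₁ ⊆ X
  have hC₀X : C₀ ⊆ X := by
    obtain ⟨w₁, hw₁c, w₂, hw₂c, hwne, hwiff⟩ :=
      h7 g₁ hg₁c X hX hg₁X (by omega)
    have hw₁ := (hwiff w₁ hw₁c).mpr (Or.inl rfl)
    have hw₂ := (hwiff w₂ hw₂c).mpr (Or.inr rfl)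
    have hrw₁ : K.rk w₁ = 2 := by have := hw₁.2.2; omega
    have hrw₂ : K.rk w₂ = 2 := by have := hw₂.2.2; omega
    have key : ∀ w : Finset V, w ∈ K.cells → K.rk w = 2 → g₁ ⊆ w → w ⊆ X →
        (∃ h ∈ K.cells, h ≠ g₁ ∧ a ∈ h ∧ h ⊆ w ∧ K.rk h = 1) := by
      intro w hw hrw hgw hwX
      exact K.other_edge ⟨h1, h2, h3, h4, h5, h6, h7⟩ hacell hra0 hw hrw
        hg₁c hrg₁ hgw hag₁
    have hsel : ∀ w : Finset V, w ∈ K.cells → K.rk w = 2 → g₁ ⊆ w → w ⊆ X →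
        (e ⊆ w ∨ g₂ ⊆ w) := by
      intro w hw hrw hgw hwX
      obtain ⟨h', hh'c, hh'ne, hah', hh'w, hrh'⟩ := key w hw hrw hgw hwX
      have : h' ∈ S := by
        rw [← hedges]
        simp only [edgesIn, EdgesAt, Finset.mem_filter]
        exact ⟨⟨hh'c, hrh', hah'⟩, hh'w.trans hwX⟩
      simp only [hS, Finset.mem_insert, Finset.mem_singleton] at this
      rcases this with h | h | h
      · subst h; exact Or.inl hh'w
      · exact absurd h hh'ne
      · subst h; exact Or.inr hh'w
    rcases hsel w₁ hw₁c hrw₁ hw₁.1 hw₁.2.1 with hc₁ | hc₁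
    · rcases hsel w₂ hw₂c hrw₂ hw₂.1 hw₂.2.1 with hc₂ | hc₂
      · -- both contain g₁ and e: contradiction with w₁ ≠ w₂
        exact absurd (K.two_cells_eq ⟨h1, h2, h3, h4, h5, h6, h7⟩ hgb
          hw₁c hrw₁ hw₂c hrw₂ hg₁c hrg₁ he hre heg₁.symm hw₁.1 hc₁ hw₂.1 hc₂) hwne
      · -- w₂ = C₀
        have : w₂ = C₀ := K.two_cells_eq ⟨h1, h2, h3, h4, h5, h6, h7⟩ hgb
          hw₂c hrw₂ hC₀ hrkC₀ hg₁c hrg₁ hg₂c hrg₂ hgne hw₂.1 hc₂ hg₁.2.1 hg₂.2.1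
        rw [← this]; exact hw₂.2.1
    · -- w₁ = C₀
      have : w₁ = C₀ := K.two_cells_eq ⟨h1, h2, h3, h4, h5, h6, h7⟩ hgb
        hw₁c hrw₁ hC₀ hrkC₀ hg₁c hrg₁ hg₂c hrg₂ hgne hw₁.1 hc₁ hg₁.2.1 hg₂.2.1
      rw [← this]; exact hw₁.2.1
  -- transport the invariant around the loop
  have hchain' : List.Chain' K.EdgeRel (c ++ [a]) := hchain a hhead
  have hmem : ∀ x ∈ c ++ [a], x ∈ C := by
    intro x hx
    rcases List.mem_append.mp hx with h | h
    · rw [← hctf]; exact List.mem_toFinset.mpr h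
    · have : x = a := by simpa using h
      subst this; exact haC
  have hhead' : (c ++ [a]).head? = some a := by
    cases c with
    | nil => simp at hhead
    | cons x cs =>
      have : x = a := by simpa using hhead
      subst this; simp
  obtain ⟨b, hb, hf, hrf, hfX, hfC⟩ :=
    K.transport_inv ⟨h1, h2, h3, h4, h5, h6, h7⟩ hgb hC₀ hrkC₀ hCC₀ hclose hX
      hC₀X ht hchain' hmem a hhead' he hre heX heC
  have hba : b = a := by
    rw [List.getLast?_concat] at hb
    simpa using hb.symm
  subst hba
  -- f is an edge of X at a with f ∩ C = {b}, so f ∈ S and f = e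
  have haf : b ∈ f := by
    have : b ∈ f ∩ C := by rw [hfC]; simp
    exact (Finset.mem_inter.mp this).1
  have hfS : f ∈ S := by
    rw [← hedges]
    simp only [edgesIn, EdgesAt, Finset.mem_filter]
    exact ⟨⟨hf, hrf, haf⟩, hfX⟩
  simp only [hS, Finset.mem_insert, Finset.mem_singleton] at hfS
  rcases hfS with h | h | h
  · exact h
  · subst h; exact absurd hfC (hcg f hf hrf hg₁C)
  · subst h; exact absurd hfC (hcg f hf hrf hg₂C)

end Precc
end
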